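/- arXiv:2501.11092 — 8 statements merged into one kernel-verified Lean document; each statement's English description precedes it below -/
import Mathlib

section
/- For all integers k ≥ 0 and n ≥ 1 and all real x, W_n^{(k)}(x) = (−2)^{n(n−1)/2} · (sin x)^{n(n+1)/2} · G(n+1) · C_k^{(n)}(cos x). -/
open Real Finset

/-- Wronskian of `m` functions: determinant of the matrix whose `(i,j)` entry is
the `i`-th derivative of `u j` (rows indexed from the 0-th derivative). -/
noncomputable def wronskian (m : ℕ) (u : Fin m → ℝ → ℝ) (x : ℝ) : ℝ :=
  Matrix.det (Matrix.of fun i j : Fin m => iteratedDeriv (i : ℕ) (u j) x)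

/-- `W n k x = Wr{sin x, sin 2x, …, sin (n-1)x, sin (n+k)x}`; for `n = 1` this is
`sin ((k+1) x)`. -/
noncomputable def W (n k : ℕ) (x : ℝ) : ℝ :=
  wronskian n (fun j y =>
    if (j : ℕ) = n - 1 then Real.sin (((n + k : ℕ) : ℝ) * y)
    else Real.sin ((((j : ℕ) + 1 : ℕ) : ℝ) * y)) x

/-- Gegenbauer polynomial `C_k^{(ν)}(t)`. -/
noncomputable def gegenbauerC (ν : ℝ) (k : ℕ) (t : ℝ) : ℝ :=
  ∑ m ∈ Finset.range (k / 2 + 1),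
    (-1 : ℝ) ^ m *
      (Real.Gamma (ν + k - m) /
        (Real.Gamma ν * (m.factorial : ℝ) * ((k - 2 * m).factorial : ℝ))) *
      (2 * t) ^ (k - 2 * m)


lemma my_iteratedDeriv_const_mul {n : ℕ} {f : ℝ → ℝ} (h : ContDiff ℝ (⊤:ℕ∞) f) (c : ℝ) (x : ℝ) :
    iteratedDeriv n (fun z => c * f z) x = c * iteratedDeriv n f x := by
  simp_rw [← iteratedDerivWithin_univ]
  exact iteratedDerivWithin_const_mul (Set.mem_univ x) uniqueDiffOn_univ c
    ((h.of_le (by exact_mod_cast (le_top : ((n:ℕ):ℕ∞) ≤ ⊤))).contDiffWithinAt)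

lemma smooth_iteratedDeriv {f : ℝ → ℝ} (h : ContDiff ℝ (⊤:ℕ∞) f) (n : ℕ) :
    ContDiff ℝ (⊤:ℕ∞) (iteratedDeriv n f) := by
  rw [iteratedDeriv_eq_iterate]
  exact ContDiff.iterate_deriv n h

lemma leibniz_iteratedDeriv (i : ℕ) {u v : ℝ → ℝ} (hu : ContDiff ℝ (⊤:ℕ∞) u)
    (hv : ContDiff ℝ (⊤:ℕ∞) v) (x : ℝ) :
    iteratedDeriv i (fun y => u y * v y) x =
      ∑ r ∈ Finset.range (i + 1),
        (i.choose r : ℝ) * (iteratedDeriv (i - r) u x * iteratedDeriv r v x) := by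
  induction i generalizing x with
  | zero => simp
  | succ i ih =>
    rw [iteratedDeriv_succ]
    have hfun : iteratedDeriv i (fun y => u y * v y) = fun x =>
        ∑ r ∈ Finset.range (i + 1),
          (i.choose r : ℝ) * (iteratedDeriv (i - r) u x * iteratedDeriv r v x) :=
      funext fun x => ih x
    rw [hfun]
    have hdiff : ∀ (m : ℕ) (f : ℝ → ℝ), ContDiff ℝ (⊤:ℕ∞) f →
        DifferentiableAt ℝ (iteratedDeriv m f) x := fun m f hf =>
      ((smooth_iteratedDeriv hf m).differentiable (by simp)).differentiableAt
    have hder : ∀ r ∈ Finset.range (i+1), HasDerivAt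
        (fun x => (i.choose r : ℝ) * (iteratedDeriv (i - r) u x * iteratedDeriv r v x))
        ((i.choose r : ℝ) * (iteratedDeriv (i - r) u x * iteratedDeriv (r+1) v x) +
         (i.choose r : ℝ) * (iteratedDeriv (i - r + 1) u x * iteratedDeriv r v x)) x := by
      intro r _
      have h1 := ((hdiff (i-r) u hu).hasDerivAt.fun_mul (hdiff r v hv).hasDerivAt).const_mul
        ((i.choose r : ℝ))
      rw [iteratedDeriv_succ (f := u), iteratedDeriv_succ (f := v)]
      exact h1.congr_deriv (by ring)
    rw [(HasDerivAt.fun_sum hder).deriv, Finset.sum_add_distrib]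
    set T : ℕ → ℕ → ℝ := fun a b => iteratedDeriv a u x * iteratedDeriv b v x with hT
    have e1 : ∑ r ∈ Finset.range (i+1), (i.choose r : ℝ) * T (i - r + 1) r
        = ∑ r ∈ Finset.range (i+1+1), (i.choose r : ℝ) * T (i + 1 - r) r := by
      rw [Finset.sum_range_succ (n := i+1), Nat.choose_succ_self]
      simp only [Nat.cast_zero, zero_mul, add_zero]
      refine Finset.sum_congr rfl fun r hr => ?_
      rw [Finset.mem_range] at hr
      congr 2
      omega
    have e2 : ∑ r ∈ Finset.range (i+1), (i.choose r : ℝ) * T (i - r) (r+1)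
        = ∑ r ∈ Finset.range (i+1+1),
            (if r = 0 then 0 else ((i.choose (r-1) : ℝ) * T (i + 1 - r) r)) := by
      have hsplit := Finset.sum_range_succ' (fun r => if r = 0 then (0:ℝ) else ((i.choose (r-1) : ℝ) * T (i + 1 - r) r)) (i+1)
      rw [hsplit]
      simp only [Nat.succ_ne_zero, if_false, eq_self_iff_true, if_true, add_zero,
        Nat.add_sub_cancel]
      refine Finset.sum_congr rfl fun r hr => ?_
      rw [Finset.mem_range] at hr
      congr 2
      omega
    rw [e1, e2, ← Finset.sum_add_distrib]
    refine Finset.sum_congr rfl fun r _ => ?_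
    rcases r with _ | s
    · simp [T]
    · rw [if_neg (Nat.succ_ne_zero s)]
      have : ((i+1).choose (s+1) : ℝ) = (i.choose (s+1) : ℝ) + (i.choose s : ℝ) := by
        rw [Nat.choose_succ_succ']
        push_cast
        ring
      rw [Nat.succ_sub_one, this]
      ring

lemma iteratedDeriv_one_fun (r : ℕ) (x : ℝ) :
    iteratedDeriv r (fun _ : ℝ => (1:ℝ)) x = if r = 0 then 1 else 0 := by
  induction r generalizing x with
  | zero => simp
  | succ r ih =>
    rw [iteratedDeriv_succ']
    have : (deriv fun _ : ℝ => (1:ℝ)) = fun _ : ℝ => (0:ℝ) := by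
      funext z; simp
    rw [this]
    rcases Nat.eq_zero_or_pos r with hr | hr
    · subst hr; simp
    · have h0 : iteratedDeriv r (fun _ : ℝ => (0:ℝ)) x = 0 := by
        have : (fun _ : ℝ => (0:ℝ)) = (fun z : ℝ => (0:ℝ) * (fun _ : ℝ => (1:ℝ)) z) := by
          funext z; simp
        rw [this, my_iteratedDeriv_const_mul contDiff_const, zero_mul]
      rw [h0, if_neg (Nat.succ_ne_zero r)]

lemma wronskian_reduce (m : ℕ) (h : Fin (m+1) → ℝ → ℝ)
    (hh : ∀ j, ContDiff ℝ (⊤:ℕ∞) (h j)) (h0 : h 0 = fun _ => 1) (x : ℝ) :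
    wronskian (m+1) (fun j y => Real.sin y * h j y) x
      = Real.sin x ^ (m+1) * wronskian m (fun j y => deriv (h j.succ) y) x := by
  classical
  set L : Matrix (Fin (m+1)) (Fin (m+1)) ℝ :=
    Matrix.of (fun i r : Fin (m+1) =>
      ((i:ℕ).choose (r:ℕ) : ℝ) * iteratedDeriv ((i:ℕ) - (r:ℕ)) Real.sin x) with hL
  set N : Matrix (Fin (m+1)) (Fin (m+1)) ℝ :=
    Matrix.of (fun r j : Fin (m+1) => iteratedDeriv (r:ℕ) (h j) x) with hN
  have hM : (Matrix.of fun i j : Fin (m+1) =>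
      iteratedDeriv (i:ℕ) (fun y => Real.sin y * h j y) x) = L * N := by
    ext i j
    rw [Matrix.mul_apply]
    simp only [Matrix.of_apply, hL, hN]
    rw [leibniz_iteratedDeriv (i:ℕ) Real.contDiff_sin (hh j) x]
    rw [Fin.sum_univ_eq_sum_range
      (fun r => ((i:ℕ).choose r : ℝ) * iteratedDeriv ((i:ℕ) - r) Real.sin x *
        iteratedDeriv r (h j) x) (m+1)]
    rw [Finset.sum_subset (Finset.range_subset_range.2 (Nat.succ_le_succ i.is_le))]
    · exact Finset.sum_congr rfl fun r _ => by ring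
    · intro r _ hr
      rw [Finset.mem_range, not_lt] at hr
      simp [Nat.choose_eq_zero_of_lt (show (i:ℕ) < r by omega)]
  have hdetL : L.det = Real.sin x ^ (m+1) := by
    have htri : L.BlockTriangular OrderDual.toDual := by
      intro i j hij
      simp only [OrderDual.toDual_lt_toDual] at hij
      simp only [hL, Matrix.of_apply]
      rw [Nat.choose_eq_zero_of_lt (by exact_mod_cast hij), Nat.cast_zero, zero_mul]
    rw [Matrix.det_of_lowerTriangular L htri]
    have : ∀ i : Fin (m+1), L i i = Real.sin x := by
      intro i
      simp [hL, Nat.choose_self]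
    rw [Finset.prod_congr rfl (fun i _ => this i), Finset.prod_const, Finset.card_univ,
      Fintype.card_fin]
  have hN0 : ∀ r : Fin (m+1), N r 0 = if r = 0 then 1 else 0 := by
    intro r
    simp only [hN, Matrix.of_apply, h0, iteratedDeriv_one_fun]
    by_cases hr : r = 0
    · subst hr; simp
    · rw [if_neg hr, if_neg (fun h' => hr (Fin.ext (by rw [h']; simp)))]
  have hdetN : N.det = wronskian m (fun j y => deriv (h j.succ) y) x := by
    rw [Matrix.det_succ_column_zero]
    rw [Finset.sum_eq_single 0]
    · rw [hN0 0, if_pos rfl]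
      simp only [Fin.val_zero, pow_zero, one_mul, mul_one, Fin.succAbove_zero]
      unfold wronskian
      congr 1
      ext r j
      simp only [Matrix.submatrix_apply, Matrix.of_apply, hN]
      rw [Fin.val_succ, iteratedDeriv_succ']
    · intro b _ hb
      rw [hN0 b, if_neg hb, mul_zero, zero_mul]
    · intro habs
      exact absurd (Finset.mem_univ 0) habs
  have hw : wronskian (m+1) (fun j y => Real.sin y * h j y) x = (L * N).det := by
    unfold wronskian; rw [hM]
  rw [hw, Matrix.det_mul, hdetL, hdetN]

lemma gegen_zero (ν : ℝ) (hν : 0 < ν) (t : ℝ) : gegenbauerC ν 0 t = 1 := by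
  have hΓ : Real.Gamma ν ≠ 0 := (Real.Gamma_pos_of_pos hν).ne'
  simp [gegenbauerC, hΓ]

lemma gegen_contDiff (ν : ℝ) (k : ℕ) : ContDiff ℝ (⊤:ℕ∞) (fun t => gegenbauerC ν k t) := by
  unfold gegenbauerC
  apply ContDiff.sum
  intro m _
  exact contDiff_const.mul ((contDiff_const.mul contDiff_id).pow _)

lemma gegen_hasDerivAt (ν : ℝ) (hν : 0 < ν) (k : ℕ) (hk : 1 ≤ k) (t : ℝ) :
    HasDerivAt (fun s => gegenbauerC ν k s) (2 * ν * gegenbauerC (ν+1) (k-1) t) t := by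
  have hterm : ∀ m ∈ Finset.range (k/2 + 1), HasDerivAt
      (fun s : ℝ => (-1:ℝ)^m * (Real.Gamma (ν + k - m) /
          (Real.Gamma ν * (m.factorial : ℝ) * ((k - 2*m).factorial : ℝ))) * (2*s)^(k - 2*m))
      ((-1:ℝ)^m * (Real.Gamma (ν + k - m) /
          (Real.Gamma ν * (m.factorial : ℝ) * ((k - 2*m).factorial : ℝ))) *
        (((k - 2*m : ℕ):ℝ) * (2*t)^(k - 2*m - 1) * 2)) t := by
    intro m _
    have h2t : HasDerivAt (fun s : ℝ => 2*s) 2 t := by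
      simpa using (hasDerivAt_id t).const_mul (2:ℝ)
    exact (h2t.pow _).const_mul _
  have hsum := HasDerivAt.fun_sum hterm
  have heq : ∑ m ∈ Finset.range (k/2+1),
      ((-1:ℝ)^m * (Real.Gamma (ν + k - m) /
          (Real.Gamma ν * (m.factorial : ℝ) * ((k - 2*m).factorial : ℝ))) *
        (((k - 2*m : ℕ):ℝ) * (2*t)^(k - 2*m - 1) * 2))
      = 2 * ν * gegenbauerC (ν+1) (k-1) t := by
    unfold gegenbauerC
    rw [Finset.mul_sum]
    rw [← Finset.sum_subset (Finset.range_subset_range.2 (show (k-1)/2 + 1 ≤ k/2 + 1 by omega))]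
    · refine Finset.sum_congr rfl fun m hm => ?_
      rw [Finset.mem_range] at hm
      have hm2 : 2*m + 1 ≤ k := by omega
      have hΓν : Real.Gamma ν ≠ 0 := (Real.Gamma_pos_of_pos hν).ne'
      have hΓ1 : Real.Gamma (ν + 1) = ν * Real.Gamma ν := Real.Gamma_add_one hν.ne'
      have harg : ν + 1 + ((k-1:ℕ):ℝ) - (m:ℝ) = ν + (k:ℝ) - m := by
        have : ((k-1:ℕ):ℝ) = (k:ℝ) - 1 := by
          push_cast [Nat.cast_sub hk]; ring
        rw [this]; ring
      have hfact : ((k - 2*m).factorial : ℝ)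
          = ((k - 2*m : ℕ):ℝ) * ((k - 1 - 2*m).factorial : ℝ) := by
        have h1 : k - 2*m = (k - 1 - 2*m) + 1 := by omega
        rw [h1, Nat.factorial_succ]
        push_cast
        ring
      have hexp : k - 2*m - 1 = k - 1 - 2*m := by omega
      have hne : ((k - 2*m : ℕ):ℝ) ≠ 0 := by
        have : (0:ℕ) < k - 2*m := by omega
        exact_mod_cast this.ne'
      rw [harg, hΓ1, hfact, hexp]
      have hmf : ((m.factorial : ℕ):ℝ) ≠ 0 := by exact_mod_cast m.factorial_ne_zero
      have hkf : (((k-1-2*m).factorial : ℕ):ℝ) ≠ 0 := by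
        exact_mod_cast (k-1-2*m).factorial_ne_zero
      field_simp
    · intro m hm hm'
      rw [Finset.mem_range] at hm
      rw [Finset.mem_range, not_lt] at hm'
      have : k - 2*m = 0 := by omega
      rw [this]
      norm_num
  exact heq ▸ hsum

lemma gegen1_eq (d : ℕ) (t : ℝ) :
    gegenbauerC 1 d t
      = ∑ m ∈ Finset.range (d/2 + 1), (-1:ℝ)^m * ((d-m).choose m : ℝ) * (2*t)^(d - 2*m) := by
  unfold gegenbauerC
  refine Finset.sum_congr rfl fun m hm => ?_
  rw [Finset.mem_range] at hm
  have hm2 : 2*m ≤ d := by omega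
  have harg : (1:ℝ) + (d:ℝ) - (m:ℝ) = ((d - m : ℕ):ℝ) + 1 := by
    rw [Nat.cast_sub (by omega)]; ring
  rw [harg, Real.Gamma_nat_eq_factorial, Real.Gamma_one]
  have hfac := Nat.choose_mul_factorial_mul_factorial (show m ≤ d - m by omega)
  have hsub : d - m - m = d - 2*m := by omega
  rw [hsub] at hfac
  have hmf : ((m.factorial : ℕ) : ℝ) ≠ 0 := by exact_mod_cast m.factorial_ne_zero
  have hkf : (((d - 2*m).factorial : ℕ) : ℝ) ≠ 0 := by exact_mod_cast (d-2*m).factorial_ne_zero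
  have : ((d - m).factorial : ℝ) = ((d-m).choose m : ℝ) * (m.factorial : ℝ)
      * ((d - 2*m).factorial : ℝ) := by exact_mod_cast hfac.symm
  rw [this]
  field_simp

lemma gegen1_rec (d : ℕ) (t : ℝ) :
    gegenbauerC 1 (d+2) t = 2*t * gegenbauerC 1 (d+1) t - gegenbauerC 1 d t := by
  rw [gegen1_eq, gegen1_eq, gegen1_eq]
  have hrange : (d+2)/2 + 1 = d/2 + 1 + 1 := by omega
  rw [hrange]
  have hsplit : ∀ m ∈ Finset.range (d/2+1+1),
      (-1:ℝ)^m * (((d+2)-m).choose m : ℝ) * (2*t)^((d+2) - 2*m)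
      = (-1:ℝ)^m * (((d+1)-m).choose m : ℝ) * (2*t)^((d+2) - 2*m)
        + (if m = 0 then 0 else
            (-1:ℝ)^m * (((d+1)-m).choose (m-1) : ℝ) * (2*t)^((d+2) - 2*m)) := by
    intro m hm
    rw [Finset.mem_range] at hm
    rcases m with _ | s
    · simp
    · rw [if_neg (Nat.succ_ne_zero s)]
      have h1 : d + 2 - (s+1) = (d - s) + 1 := by omega
      have h2 : d + 1 - (s+1) = d - s := by omega
      rw [h1, h2, Nat.choose_succ_succ, Nat.succ_sub_one]
      push_cast
      ring
  rw [Finset.sum_congr rfl hsplit, Finset.sum_add_distrib]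
  have hA : ∑ m ∈ Finset.range (d/2+1+1),
      (-1:ℝ)^m * (((d+1)-m).choose m : ℝ) * (2*t)^((d+2) - 2*m)
      = 2*t * ∑ m ∈ Finset.range ((d+1)/2+1),
          (-1:ℝ)^m * (((d+1)-m).choose m : ℝ) * (2*t)^((d+1) - 2*m) := by
    rw [Finset.mul_sum]
    rw [← Finset.sum_subset (Finset.range_subset_range.2 (show (d+1)/2+1 ≤ d/2+1+1 by omega))]
    · refine Finset.sum_congr rfl fun m hm => ?_
      rw [Finset.mem_range] at hm
      rw [show (d+2) - 2*m = ((d+1) - 2*m) + 1 by omega, pow_succ]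
      ring
    · intro m hm hm'
      rw [Finset.mem_range] at hm
      rw [Finset.mem_range, not_lt] at hm'
      rw [Nat.choose_eq_zero_of_lt (show (d+1) - m < m by omega)]
      norm_num
  have hB : ∑ m ∈ Finset.range (d/2+1+1),
      (if m = 0 then 0 else
        (-1:ℝ)^m * (((d+1)-m).choose (m-1) : ℝ) * (2*t)^((d+2) - 2*m))
      = - ∑ m ∈ Finset.range (d/2+1),
          (-1:ℝ)^m * ((d-m).choose m : ℝ) * (2*t)^(d - 2*m) := by
    rw [Finset.sum_range_succ' (fun m => if m = 0 then (0:ℝ) else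
        (-1:ℝ)^m * (((d+1)-m).choose (m-1) : ℝ) * (2*t)^((d+2) - 2*m)) (d/2+1)]
    simp only [Nat.succ_ne_zero, if_false, eq_self_iff_true, if_true, add_zero,
      Nat.add_sub_cancel]
    rw [← Finset.sum_neg_distrib]
    refine Finset.sum_congr rfl fun s hs => ?_
    rw [Finset.mem_range] at hs
    rw [show d + 1 - (s+1) = d - s by omega, show d + 2 - 2*(s+1) = d - 2*s by omega]
    push_cast
    ring
  rw [hA, hB]
  ring

lemma gegen1_one (t : ℝ) : gegenbauerC 1 1 t = 2 * t := by
  rw [gegen1_eq]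
  simp

lemma sin_gegen1 : ∀ (d : ℕ) (x : ℝ),
    Real.sin x * gegenbauerC 1 d (Real.cos x) = Real.sin (((d+1 : ℕ):ℝ) * x) := by
  intro d
  induction d using Nat.strong_induction_on with
  | _ d ih =>
    match d with
    | 0 => intro x; rw [gegen_zero 1 one_pos]; norm_num
    | 1 =>
      intro x
      rw [gegen1_one]
      have : (((1+1 : ℕ)):ℝ) * x = 2 * x := by push_cast; ring
      rw [this, Real.sin_two_mul]
      ring
    | (d+2) =>
      intro x
      rw [gegen1_rec]
      have h1 := ih (d+1) (by omega) x
      have h0 := ih d (by omega) x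
      have hexpand : Real.sin (((d+2+1 : ℕ):ℝ) * x)
          = 2 * Real.cos x * Real.sin (((d+1+1 : ℕ):ℝ) * x) - Real.sin (((d+1 : ℕ):ℝ) * x) := by
        have hs1 : ((d+2+1 : ℕ):ℝ) * x = ((d+1+1 : ℕ):ℝ) * x + x := by push_cast; ring
        have hs2 : ((d+1 : ℕ):ℝ) * x = ((d+1+1 : ℕ):ℝ) * x - x := by push_cast; ring
        rw [hs1, hs2, Real.sin_add, Real.sin_sub]
        ring
      rw [hexpand, ← h1, ← h0]
      ring

lemma wronskian_one (u : Fin 1 → ℝ → ℝ) (x : ℝ) : wronskian 1 u x = u 0 x := by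
  unfold wronskian
  rw [Matrix.det_fin_one]
  simp

lemma wronskian_smul (m : ℕ) (c : ℝ) (u : Fin m → ℝ → ℝ)
    (hu : ∀ j, ContDiff ℝ (⊤:ℕ∞) (u j)) (x : ℝ) :
    wronskian m (fun j y => c * u j y) x = c ^ m * wronskian m u x := by
  unfold wronskian
  have : (Matrix.of fun i j : Fin m => iteratedDeriv (i:ℕ) ((fun j y => c * u j y) j) x)
      = c • (Matrix.of fun i j : Fin m => iteratedDeriv (i:ℕ) (u j) x) := by
    ext i j
    simp [my_iteratedDeriv_const_mul (hu j)]
  rw [this, Matrix.det_smul]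
  simp

def deg (m k : ℕ) (j : Fin m) : ℕ := if (j:ℕ) = m - 1 then m - 1 + k else j

noncomputable def Kst (m : ℕ) (ν : ℝ) : ℝ :=
  (-2:ℝ)^(m*(m-1)/2) * ∏ ℓ ∈ Finset.range (m-1), (ν + ℓ)^(m-1-ℓ)

lemma mainLemma : ∀ m : ℕ, 1 ≤ m → ∀ (ν : ℝ), 0 < ν → ∀ (k : ℕ) (x : ℝ),
    wronskian m (fun j y => Real.sin y * gegenbauerC ν (deg m k j) (Real.cos y)) x
      = Real.sin x ^ (m*(m+1)/2) * Kst m ν * gegenbauerC (ν + m - 1) k (Real.cos x) := by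
  intro m
  induction m with
  | zero => intro h; omega
  | succ m ih =>
    intro _ ν hν k x
    rcases Nat.eq_zero_or_pos m with hm0 | hm
    · subst hm0
      rw [wronskian_one]
      have hdeg : deg 1 k 0 = k := by simp [deg]
      have hK : Kst 1 ν = 1 := by simp [Kst]
      have hidx : ν + ((1:ℕ):ℝ) - 1 = ν := by push_cast; ring
      rw [hdeg, hK, hidx]
      norm_num
    -- inductive step, m ≥ 1
    · have hdegsucc : ∀ j : Fin m, deg (m+1) k j.succ - 1 = deg m k j := by
        intro j
        have hj := j.is_lt
        simp only [deg, Fin.val_succ]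
        split_ifs with h1 h2 h2 <;> omega
      have hdegpos : ∀ j : Fin m, 1 ≤ deg (m+1) k j.succ := by
        intro j
        simp only [deg, Fin.val_succ]
        split_ifs <;> omega
      have hcd : ∀ j : Fin (m+1), ContDiff ℝ (⊤:ℕ∞)
          (fun y => gegenbauerC ν (deg (m+1) k j) (Real.cos y)) :=
        fun j => (gegen_contDiff ν _).comp Real.contDiff_cos
      have h0 : (fun y => gegenbauerC ν (deg (m+1) k (0 : Fin (m+1))) (Real.cos y))
          = fun _ : ℝ => (1:ℝ) := by
        funext y
        have : deg (m+1) k (0 : Fin (m+1)) = 0 := by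
          unfold deg
          split_ifs with hd
          · simp at hd; omega
          · simp
        rw [this, gegen_zero ν hν]
      have hred := wronskian_reduce m
        (fun j y => gegenbauerC ν (deg (m+1) k j) (Real.cos y)) hcd h0 x
      rw [hred]
      have hder : (fun (j : Fin m) (y : ℝ) =>
            deriv (fun z => gegenbauerC ν (deg (m+1) k j.succ) (Real.cos z)) y)
          = fun (j : Fin m) (y : ℝ) => (-(2*ν)) *
              (Real.sin y * gegenbauerC (ν+1) (deg m k j) (Real.cos y)) := by
        funext j y
        have H := (gegen_hasDerivAt ν hν (deg (m+1) k j.succ) (hdegpos j)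
          (Real.cos y)).comp y (Real.hasDerivAt_cos y)
        have H' : HasDerivAt (fun z => gegenbauerC ν (deg (m+1) k j.succ) (Real.cos z))
            (2 * ν * gegenbauerC (ν+1) (deg (m+1) k j.succ - 1) (Real.cos y) * (-Real.sin y))
            y := H
        rw [H'.deriv, hdegsucc j]
        ring
      rw [hder]
      have hsmul := wronskian_smul m (-(2*ν))
        (fun j y => Real.sin y * gegenbauerC (ν+1) (deg m k j) (Real.cos y))
        (fun j => Real.contDiff_sin.mul ((gegen_contDiff (ν+1) _).comp Real.contDiff_cos)) x
      rw [hsmul, ih hm (ν+1) (by linarith) k x]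
      -- algebra
      have hKrec : Kst (m+1) ν = (-(2*ν))^m * Kst m (ν+1) := by
        unfold Kst
        have hprod : ∏ ℓ ∈ Finset.range m, (ν + (ℓ:ℝ))^(m-ℓ)
            = ν^m * ∏ ℓ ∈ Finset.range (m-1), ((ν+1) + (ℓ:ℝ))^(m-1-ℓ) := by
          obtain ⟨p, rfl⟩ : ∃ p, m = p + 1 := ⟨m - 1, by omega⟩
          rw [Finset.prod_range_succ' (fun ℓ => (ν + (ℓ:ℝ))^(p+1-ℓ)) p]
          rw [mul_comm]
          congr 1
          · norm_num
          · refine Finset.prod_congr (by norm_num) fun ℓ hℓ => ?_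
            rw [Finset.mem_range] at hℓ
            rw [show p + 1 - (ℓ+1) = p + 1 - 1 - ℓ by omega]
            push_cast
            ring_nf
        have hpow : (m+1)*((m+1)-1)/2 = m + m*(m-1)/2 := by
          have e1 : 2 ∣ m*(m-1) := by
            rcases Nat.even_or_odd m with he | ho
            · exact Dvd.dvd.mul_right he.two_dvd _
            · exact Dvd.dvd.mul_left (Nat.Odd.sub_odd ho odd_one).two_dvd _
          have e2 : (m+1)*((m+1)-1) = 2*m + m*(m-1) := by
            cases m with
            | zero => rfl
            | succ p => simp [Nat.succ_sub_one]; ring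
          omega
        rw [hpow, pow_add, Nat.add_sub_cancel, hprod]
        have : (-(2*ν))^m = (-2:ℝ)^m * ν^m := by
          rw [show -(2*ν) = (-2) * ν by ring, mul_pow]
        rw [this]
        ring
      rw [hKrec]
      have hspow : Real.sin x ^ (m+1) * Real.sin x ^ (m*(m+1)/2)
          = Real.sin x ^ ((m+1)*((m+1)+1)/2) := by
        rw [← pow_add]
        congr 1
        have e1 : 2 ∣ m*(m+1) := Nat.even_mul_succ_self m |>.two_dvd
        have e2 : (m+1)*((m+1)+1) = 2*(m+1) + m*(m+1) := by ring
        omega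
      have hidx : ν + 1 + (m:ℝ) - 1 = ν + ((m+1:ℕ):ℝ) - 1 := by push_cast; ring
      rw [hidx]
      rw [← hspow]
      ring

lemma factprod : ∀ p : ℕ, ∏ ℓ ∈ Finset.range p, ((1:ℝ) + (ℓ:ℝ))^(p-ℓ)
    = ∏ j ∈ Finset.range (p+1), (j.factorial : ℝ) := by
  intro p
  induction p with
  | zero => simp
  | succ p ih =>
    have hsplit : ∀ ℓ ∈ Finset.range (p+1),
        ((1:ℝ) + (ℓ:ℝ))^(p+1-ℓ) = ((1:ℝ) + (ℓ:ℝ))^(p-ℓ) * ((1:ℝ) + (ℓ:ℝ)) := by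
      intro ℓ hℓ
      rw [Finset.mem_range] at hℓ
      rw [← pow_succ]
      congr 1
      omega
    rw [Finset.prod_congr rfl hsplit, Finset.prod_mul_distrib]
    have h1 : ∏ ℓ ∈ Finset.range (p+1), ((1:ℝ) + (ℓ:ℝ))^(p-ℓ)
        = ∏ ℓ ∈ Finset.range p, ((1:ℝ) + (ℓ:ℝ))^(p-ℓ) := by
      rw [Finset.prod_range_succ]
      simp
    have h2 : ∏ ℓ ∈ Finset.range (p+1), ((1:ℝ) + (ℓ:ℝ)) = ((p+1).factorial : ℝ) := by
      rw [← Finset.prod_range_add_one_eq_factorial (p+1)]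
      push_cast
      exact Finset.prod_congr rfl fun ℓ _ => by ring
    rw [h1, h2, ih, Finset.prod_range_succ]
    rw [Finset.prod_range_succ, Finset.prod_range_succ]

theorem stmt0 (k n : ℕ) (hn : 1 ≤ n) (x : ℝ) :
    W n k x =
      (-2 : ℝ) ^ (n * (n - 1) / 2) * Real.sin x ^ (n * (n + 1) / 2) *
        (∏ j ∈ Finset.range n, (j.factorial : ℝ)) * gegenbauerC n k (Real.cos x) := by
  unfold W
  have hfun : (fun (j : Fin n) (y : ℝ) =>
      if (j : ℕ) = n - 1 then Real.sin (((n + k : ℕ) : ℝ) * y)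
      else Real.sin ((((j : ℕ) + 1 : ℕ) : ℝ) * y))
      = fun (j : Fin n) (y : ℝ) => Real.sin y * gegenbauerC 1 (deg n k j) (Real.cos y) := by
    funext j y
    by_cases hj : (j:ℕ) = n - 1
    · rw [if_pos hj]
      have hdeg : deg n k j = n - 1 + k := by simp [deg, hj]
      rw [hdeg, sin_gegen1 (n-1+k) y]
      congr 2
      norm_cast
      omega
    · rw [if_neg hj]
      have hdeg : deg n k j = (j:ℕ) := by simp [deg, hj]
      rw [hdeg, sin_gegen1 (j:ℕ) y]
  rw [hfun, mainLemma n hn 1 one_pos k x]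
  have hidx : (1:ℝ) + (n:ℝ) - 1 = (n:ℝ) := by ring
  rw [hidx]
  have hK : Kst n 1 = (-2:ℝ)^(n*(n-1)/2) * ∏ j ∈ Finset.range n, (j.factorial : ℝ) := by
    unfold Kst
    congr 1
    have := factprod (n-1)
    rw [show n - 1 + 1 = n by omega] at this
    rw [← this]
  rw [hK]
  ring
end

section
/- For all integers n ≥ 1 and all real x, Wr{sin(x), sin(2x), sin(3x), …, sin(nx)}(x) = (−2)^{n(n−1)/2} · (sin x)^{n(n+1)/2} · G(n+1). -/
open Real Finset

open scoped ContDiff Polynomial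


noncomputable def ccf : ℕ → ℕ → ℝ → ℝ
  | 0, 0 => Real.sin
  | 0, _ + 1 => 0
  | i + 1, 0 => deriv (ccf i 0)
  | i + 1, m + 1 => fun x => deriv (ccf i (m + 1)) x - Real.sin x * ccf i m x

lemma ccf_succ_zero (i : ℕ) : ccf (i + 1) 0 = deriv (ccf i 0) := rfl
lemma ccf_succ_succ (i m : ℕ) :
    ccf (i + 1) (m + 1) = fun x => deriv (ccf i (m + 1)) x - Real.sin x * ccf i m x := rfl

lemma ccf_contDiff : ∀ i m : ℕ, ContDiff ℝ ∞ (ccf i m)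
  | 0, 0 => Real.contDiff_sin
  | 0, _ + 1 => contDiff_const
  | i + 1, 0 => (contDiff_infty_iff_deriv.mp (ccf_contDiff i 0)).2
  | i + 1, m + 1 =>
      ((contDiff_infty_iff_deriv.mp (ccf_contDiff i (m + 1))).2).sub
        (Real.contDiff_sin.mul (ccf_contDiff i m))

lemma ccf_zero : ∀ i m : ℕ, i < m → ccf i m = (0 : ℝ → ℝ)
  | _, 0, h => absurd h (by omega)
  | 0, _ + 1, _ => rfl
  | i + 1, m + 1, h => by
      have h1 : ccf i (m + 1) = 0 := ccf_zero i (m + 1) (by omega)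
      have h2 : ccf i m = 0 := ccf_zero i m (by omega)
      funext x
      rw [ccf_succ_succ, h1, h2]
      simp [show (0:ℝ→ℝ) = fun _ => (0:ℝ) from rfl]

lemma ccf_diag : ∀ i : ℕ, ccf i i = fun x => Real.sin x * (-Real.sin x) ^ i
  | 0 => by funext x; simp [ccf]
  | i + 1 => by
      funext x
      have h1 : ccf i (i + 1) = 0 := ccf_zero i (i + 1) (by omega)
      rw [ccf_succ_succ, h1, ccf_diag i]
      simp only [show (0:ℝ→ℝ) = fun _ => (0:ℝ) from rfl, deriv_const']
      ring

lemma ccf_spec (p : ℝ[X]) : ∀ (i : ℕ) (x : ℝ),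
    iteratedDeriv i (fun y => Real.sin y * p.eval (Real.cos y)) x
      = ∑ m ∈ range (i + 1), ccf i m x * (Polynomial.derivative^[m] p).eval (Real.cos x)
  | 0, x => by simp [ccf]
  | i + 1, x => by
      have hfun : iteratedDeriv i (fun y => Real.sin y * p.eval (Real.cos y))
          = fun x => ∑ m ∈ range (i + 1),
              ccf i m x * (Polynomial.derivative^[m] p).eval (Real.cos x) :=
        funext fun y => ccf_spec p i y
      set q : ℕ → ℝ := fun m => (Polynomial.derivative^[m] p).eval (Real.cos x) with hq
      have hterm : ∀ m ∈ range (i + 1),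
          HasDerivAt (fun y => ccf i m y * (Polynomial.derivative^[m] p).eval (Real.cos y))
            (deriv (ccf i m) x * q m + ccf i m x * (q (m + 1) * (-Real.sin x))) x := by
        intro m _
        have h1 : HasDerivAt (ccf i m) (deriv (ccf i m) x) x :=
          (((ccf_contDiff i m).differentiable (by simp)) x).hasDerivAt
        have h2 : HasDerivAt (fun y => (Polynomial.derivative^[m] p).eval (Real.cos y))
            ((Polynomial.derivative (Polynomial.derivative^[m] p)).eval (Real.cos x)
              * (-Real.sin x)) x :=
          (Polynomial.hasDerivAt _ (Real.cos x)).comp x (Real.hasDerivAt_cos x)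
        rw [← Function.iterate_succ_apply' (⇑Polynomial.derivative) m p] at h2
        exact h1.mul h2
      have hd : deriv (fun y => ∑ m ∈ range (i + 1),
            ccf i m y * (Polynomial.derivative^[m] p).eval (Real.cos y)) x
          = ∑ m ∈ range (i + 1),
              (deriv (ccf i m) x * q m + ccf i m x * (q (m + 1) * (-Real.sin x))) :=
        (HasDerivAt.fun_sum hterm).deriv
      rw [iteratedDeriv_succ, hfun, hd]
      have hz : deriv (ccf i (i + 1)) x = 0 := by
        rw [ccf_zero i (i + 1) (by omega), show (0:ℝ→ℝ) = fun _ => (0:ℝ) from rfl, deriv_const']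
      calc
        ∑ m ∈ range (i + 1), (deriv (ccf i m) x * q m + ccf i m x * (q (m + 1) * (-Real.sin x)))
            = (∑ m ∈ range (i + 1), deriv (ccf i m) x * q m)
              + ∑ m ∈ range (i + 1), ccf i m x * (q (m + 1) * (-Real.sin x)) :=
          Finset.sum_add_distrib
        _ = (∑ m ∈ range (i + 2), deriv (ccf i m) x * q m)
              + ∑ m ∈ range (i + 1), ccf i m x * (q (m + 1) * (-Real.sin x)) := by
          rw [Finset.sum_range_succ (fun m => deriv (ccf i m) x * q m) (i + 1), hz]
          ring
        _ = ((∑ m ∈ range (i + 1), deriv (ccf i (m + 1)) x * q (m + 1))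
              + deriv (ccf i 0) x * q 0)
              + ∑ m ∈ range (i + 1), ccf i m x * (q (m + 1) * (-Real.sin x)) := by
          rw [Finset.sum_range_succ' (fun m => deriv (ccf i m) x * q m) (i + 1)]
        _ = (∑ m ∈ range (i + 1), (deriv (ccf i (m + 1)) x * q (m + 1)
              + ccf i m x * (q (m + 1) * (-Real.sin x)))) + deriv (ccf i 0) x * q 0 := by
          rw [Finset.sum_add_distrib]; ring
        _ = (∑ m ∈ range (i + 1), ccf (i + 1) (m + 1) x * q (m + 1)) + ccf (i + 1) 0 x * q 0 := by
          refine congrArg₂ (· + ·) (Finset.sum_congr rfl fun m _ => ?_) ?_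
          · rw [ccf_succ_succ]; ring
          · rw [ccf_succ_zero]
        _ = ∑ m ∈ range (i + 2), ccf (i + 1) m x * q m :=
          (Finset.sum_range_succ' (fun m => ccf (i + 1) m x * q m) (i + 1)).symm

lemma U_natDegree_coeff (j : ℕ) :
    (Polynomial.Chebyshev.U ℝ (j : ℤ)).natDegree ≤ j ∧
      (Polynomial.Chebyshev.U ℝ (j : ℤ)).coeff j = 2 ^ j := by
  have hC : (2 : ℝ[X]) = Polynomial.C (2 : ℝ) := (map_ofNat Polynomial.C 2).symm
  have hdeg2X : (2 * Polynomial.X : ℝ[X]).natDegree ≤ 1 := by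
    rw [hC]
    simpa using Polynomial.natDegree_C_mul_le (2:ℝ) Polynomial.X
  induction j using Nat.twoStepInduction with
  | zero => simp
  | one =>
    refine ⟨by simpa using hdeg2X, ?_⟩
    rw [show ((1:ℕ):ℤ) = 1 from rfl, Polynomial.Chebyshev.U_one, hC]
    simp
  | more j ih1 ih2 =>
    have hrec : Polynomial.Chebyshev.U ℝ ((j + 2 : ℕ) : ℤ)
        = 2 * Polynomial.X * Polynomial.Chebyshev.U ℝ ((j + 1 : ℕ) : ℤ)
          - Polynomial.Chebyshev.U ℝ (j : ℤ) := by
      push_cast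
      exact Polynomial.Chebyshev.U_add_two ℝ (j : ℤ)
    constructor
    · rw [hrec]
      refine le_trans (Polynomial.natDegree_sub_le _ _) ?_
      have h1 : (2 * Polynomial.X * Polynomial.Chebyshev.U ℝ ((j + 1 : ℕ) : ℤ)).natDegree ≤ j + 2 := by
        refine le_trans (Polynomial.natDegree_mul_le) ?_
        have := ih2.1
        omega
      have h2 := ih1.1
      omega
    · rw [hrec, Polynomial.coeff_sub,
        Polynomial.coeff_eq_zero_of_natDegree_lt (lt_of_le_of_lt ih1.1 (by omega)),
        sub_zero, mul_assoc, hC, Polynomial.coeff_C_mul, Polynomial.coeff_X_mul, ih2.2]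
      ring

lemma sin_eq_U (j : ℕ) (y : ℝ) :
    Real.sin (((j + 1 : ℕ) : ℝ) * y)
      = Real.sin y * (Polynomial.Chebyshev.U ℝ (j : ℤ)).eval (Real.cos y) := by
  have h := Polynomial.Chebyshev.U_real_cos y (j : ℤ)
  rw [mul_comm] at h
  push_cast at h ⊢
  rw [← h]

lemma eval_iterate_derivative (p : ℝ[X]) (n r : ℕ) (hp : p.natDegree < n) (t : ℝ) :
    (Polynomial.derivative^[r] p).eval t
      = ∑ k ∈ range n, ((Nat.descFactorial k r : ℝ) * t ^ (k - r)) * p.coeff k := by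
  conv_lhs => rw [p.as_sum_range' n hp]
  rw [Polynomial.iterate_derivative_sum, Polynomial.eval_finset_sum]
  refine Finset.sum_congr rfl fun k _ => ?_
  rw [← Polynomial.C_mul_X_pow_eq_monomial, Polynomial.iterate_derivative_C_mul,
    Polynomial.iterate_derivative_X_pow_eq_C_mul]
  simp
  ring


theorem stmt1 (n : ℕ) (hn : 1 ≤ n) (x : ℝ) :
    wronskian n (fun j y => Real.sin ((((j : ℕ) + 1 : ℕ) : ℝ) * y)) x =
      (-2 : ℝ) ^ (n * (n - 1) / 2) * Real.sin x ^ (n * (n + 1) / 2) *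
        (∏ j ∈ Finset.range n, (j.factorial : ℝ)) := by
  classical
  set t := Real.cos x with ht
  set C : Matrix (Fin n) (Fin n) ℝ := Matrix.of fun i m => ccf (i : ℕ) (m : ℕ) x with hC
  set P : Matrix (Fin n) (Fin n) ℝ := Matrix.of fun r j =>
    (Polynomial.derivative^[(r : ℕ)] (Polynomial.Chebyshev.U ℝ ((j : ℕ) : ℤ))).eval t with hP
  set V : Matrix (Fin n) (Fin n) ℝ := Matrix.of fun r k =>
    (Nat.descFactorial (k : ℕ) (r : ℕ) : ℝ) * t ^ ((k : ℕ) - (r : ℕ)) with hV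
  set A : Matrix (Fin n) (Fin n) ℝ := Matrix.of fun k j =>
    (Polynomial.Chebyshev.U ℝ ((j : ℕ) : ℤ)).coeff (k : ℕ) with hA
  have hM : (Matrix.of fun i j : Fin n =>
      iteratedDeriv (i : ℕ) (fun y => Real.sin ((((j : ℕ) + 1 : ℕ) : ℝ) * y)) x) = C * P := by
    ext i j
    rw [Matrix.mul_apply]
    have hfe : (fun y => Real.sin ((((j : ℕ) + 1 : ℕ) : ℝ) * y))
        = fun y => Real.sin y * (Polynomial.Chebyshev.U ℝ ((j : ℕ) : ℤ)).eval (Real.cos y) :=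
      funext fun y => sin_eq_U (j : ℕ) y
    have hsum : ∑ m : Fin n, C i m * P m j
        = ∑ m ∈ range n, ccf (i : ℕ) m x
            * (Polynomial.derivative^[m] (Polynomial.Chebyshev.U ℝ ((j : ℕ) : ℤ))).eval t :=
      Fin.sum_univ_eq_sum_range
        (fun m => ccf (i : ℕ) m x
          * (Polynomial.derivative^[m] (Polynomial.Chebyshev.U ℝ ((j : ℕ) : ℤ))).eval t) n
    rw [Matrix.of_apply, hfe, ccf_spec, hsum, ht]
    refine Finset.sum_subset (Finset.range_subset_range.mpr i.isLt) fun m _ hm => ?_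
    rw [ccf_zero (i : ℕ) m (by simp only [Finset.mem_range, not_lt] at hm ⊢; omega)]
    simp
  have hPVA : P = V * A := by
    ext r j
    rw [hP, Matrix.mul_apply, Matrix.of_apply]
    have := eval_iterate_derivative (Polynomial.Chebyshev.U ℝ ((j : ℕ) : ℤ)) n (r : ℕ)
      (lt_of_le_of_lt (U_natDegree_coeff (j : ℕ)).1 j.isLt) t
    rw [this]
    exact (Fin.sum_univ_eq_sum_range
      (fun k => (Nat.descFactorial k (r : ℕ) : ℝ) * t ^ (k - (r : ℕ))
        * (Polynomial.Chebyshev.U ℝ ((j : ℕ) : ℤ)).coeff k) n).symm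
  have hdC : C.det = Real.sin x ^ n * (-Real.sin x) ^ (∑ m ∈ range n, m) := by
    rw [Matrix.det_of_lowerTriangular C (fun i j hij => by
      rw [hC, Matrix.of_apply, ccf_zero (i : ℕ) (j : ℕ)
        (by exact_mod_cast (OrderDual.toDual_lt_toDual.mp hij : i < j))]
      simp)]
    have : ∀ i : Fin n, C i i = Real.sin x * (-Real.sin x) ^ (i : ℕ) := fun i => by
      rw [hC, Matrix.of_apply, ccf_diag]
    rw [Finset.prod_congr rfl fun i _ => this i,
      Fin.prod_univ_eq_prod_range (fun i => Real.sin x * (-Real.sin x) ^ i) n,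
      Finset.prod_mul_distrib, Finset.prod_const, Finset.card_range,
      Finset.prod_pow_eq_pow_sum]
  have hdV : V.det = ∏ m ∈ range n, (m.factorial : ℝ) := by
    rw [Matrix.det_of_upperTriangular (M := V) (fun i j hij => by
      rw [hV, Matrix.of_apply, Nat.descFactorial_eq_zero_iff_lt.mpr
        (by exact_mod_cast (hij : (j : Fin n) < i))]
      simp)]
    have : ∀ i : Fin n, V i i = ((i : ℕ).factorial : ℝ) := fun i => by
      rw [hV, Matrix.of_apply, Nat.descFactorial_self, Nat.sub_self, pow_zero, mul_one]
    rw [Finset.prod_congr rfl fun i _ => this i,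
      Fin.prod_univ_eq_prod_range (fun i => (i.factorial : ℝ)) n]
  have hdA : A.det = (2 : ℝ) ^ (∑ m ∈ range n, m) := by
    rw [Matrix.det_of_upperTriangular (M := A) (fun k j hkj => by
      rw [hA, Matrix.of_apply, Polynomial.coeff_eq_zero_of_natDegree_lt
        (lt_of_le_of_lt (U_natDegree_coeff (j : ℕ)).1 (by exact_mod_cast (hkj : j < k)))])]
    have : ∀ i : Fin n, A i i = (2 : ℝ) ^ (i : ℕ) := fun i => by
      rw [hA, Matrix.of_apply, (U_natDegree_coeff (i : ℕ)).2]
    rw [Finset.prod_congr rfl fun i _ => this i,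
      Fin.prod_univ_eq_prod_range (fun i => (2 : ℝ) ^ i) n,
      Finset.prod_pow_eq_pow_sum]
  have hS : ∑ m ∈ range n, m = n * (n - 1) / 2 := Finset.sum_range_id n
  have heven : Even (n * (n - 1)) := by
    obtain ⟨m, rfl⟩ := Nat.exists_eq_add_of_le hn
    rw [mul_comm]
    simpa [add_comm] using Nat.even_mul_succ_self m
  have harith : n + n * (n - 1) / 2 = n * (n + 1) / 2 := by
    obtain ⟨k, hk⟩ := heven
    have h2 : n * (n + 1) = n * (n - 1) + 2 * n := by
      obtain ⟨m, rfl⟩ := Nat.exists_eq_add_of_le hn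
      have h1 : 1 + m - 1 = m := by omega
      rw [h1]
      ring
    omega
  have : _root_.wronskian n (fun j y => Real.sin ((((j : ℕ) + 1 : ℕ) : ℝ) * y)) x
      = C.det * (V.det * A.det) := by
    rw [show _root_.wronskian n (fun j y => Real.sin ((((j : ℕ) + 1 : ℕ) : ℝ) * y)) x
        = (Matrix.of fun i j : Fin n =>
            iteratedDeriv (i : ℕ) (fun y => Real.sin ((((j : ℕ) + 1 : ℕ) : ℝ) * y)) x).det
      from rfl, hM, hPVA, Matrix.det_mul, Matrix.det_mul]
  rw [this, hdC, hdV, hdA, hS, neg_pow, neg_pow (2 : ℝ), ← harith, pow_add]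
  ring
end

section
/- Let n ≥ 2 and let f, g_1, …, g_{n−1} : ℝ → ℝ be smooth. Then for all real x, Wr{f, f·g_1, …, f·g_{n−1}}(x) = f(x)^n · Wr{g_1', …, g_{n−1}'}(x), where the left Wronskian is of size n×n and the right one of size (n−1)×(n−1). -/
open Real Finset

lemma iteratedDeriv_const' (c : ℝ) : ∀ n : ℕ,
    iteratedDeriv n (fun _ : ℝ => c) = fun _ => if n = 0 then c else 0 := by
  intro n
  induction n with
  | zero => simp [iteratedDeriv_zero]
  | succ k ih =>
    rw [iteratedDeriv_succ, ih]
    cases k <;> simp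

lemma my_leibniz (f g : ℝ → ℝ) (hf : ContDiff ℝ (⊤ : ℕ∞) f) (hg : ContDiff ℝ (⊤ : ℕ∞) g) :
    ∀ (n : ℕ) (x : ℝ), iteratedDeriv n (fun y => f y * g y) x =
      ∑ k ∈ Finset.range (n + 1),
        (n.choose k : ℝ) * iteratedDeriv k f x * iteratedDeriv (n - k) g x := by
  intro n
  induction n with
  | zero => intro x; simp [iteratedDeriv_zero]
  | succ n ih =>
    intro x
    have hdf : ∀ k : ℕ, DifferentiableAt ℝ (iteratedDeriv k f) x :=
      fun k => (hf.differentiable_iteratedDeriv k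
        (by exact_mod_cast WithTop.coe_lt_top _)).differentiableAt
    have hdg : ∀ k : ℕ, DifferentiableAt ℝ (iteratedDeriv k g) x :=
      fun k => (hg.differentiable_iteratedDeriv k
        (by exact_mod_cast WithTop.coe_lt_top _)).differentiableAt
    have hfun : iteratedDeriv n (fun y => f y * g y) = fun x =>
        ∑ k ∈ Finset.range (n + 1),
          (n.choose k : ℝ) * iteratedDeriv k f x * iteratedDeriv (n - k) g x :=
      funext ih
    rw [iteratedDeriv_succ, hfun]
    rw [deriv_fun_sum (A := fun k x => (n.choose k : ℝ) * iteratedDeriv k f x * iteratedDeriv (n - k) g x)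
      (fun k _ => ((hdf k).const_mul _).mul (hdg (n - k)))]
    have hterm : ∀ k ∈ Finset.range (n + 1),
        deriv (fun x => (n.choose k : ℝ) * iteratedDeriv k f x * iteratedDeriv (n - k) g x) x
          = (n.choose k : ℝ) * (iteratedDeriv (k + 1) f x * iteratedDeriv (n - k) g x
              + iteratedDeriv k f x * iteratedDeriv (n + 1 - k) g x) := by
      intro k hk
      rw [Finset.mem_range] at hk
      rw [deriv_fun_mul ((hdf k).const_mul _) (hdg (n - k)),
        deriv_const_mul _ (hdf k), ← iteratedDeriv_succ, ← iteratedDeriv_succ]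
      have : n - k + 1 = n + 1 - k := by omega
      rw [this]; ring
    rw [Finset.sum_congr rfl hterm]
    set F : ℕ → ℝ := fun k => iteratedDeriv k f x * iteratedDeriv (n + 1 - k) g x with hF
    have lhs_eq : ∑ k ∈ Finset.range (n + 1),
        (n.choose k : ℝ) * (iteratedDeriv (k + 1) f x * iteratedDeriv (n - k) g x
          + iteratedDeriv k f x * iteratedDeriv (n + 1 - k) g x)
        = (∑ k ∈ Finset.range (n + 1), (n.choose k : ℝ) * F (k + 1))
          + ∑ k ∈ Finset.range (n + 1), (n.choose k : ℝ) * F k := by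
      rw [← Finset.sum_add_distrib]
      refine Finset.sum_congr rfl fun k hk => ?_
      rw [Finset.mem_range] at hk
      have h1 : n + 1 - (k + 1) = n - k := by omega
      simp only [hF, h1]
      ring
    rw [lhs_eq]
    have rhs_eq : ∑ k ∈ Finset.range (n + 1 + 1),
        ((n + 1).choose k : ℝ) * iteratedDeriv k f x * iteratedDeriv (n + 1 - k) g x
        = ∑ k ∈ Finset.range (n + 2), ((n + 1).choose k : ℝ) * F k :=
      Finset.sum_congr rfl fun k _ => by simp only [hF]; ring
    rw [rhs_eq]
    rw [Finset.sum_range_succ' (fun k => ((n + 1).choose k : ℝ) * F k) (n + 1)]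
    have hch : ∀ k : ℕ, (((n + 1).choose (k + 1) : ℕ) : ℝ)
        = (n.choose k : ℝ) + (n.choose (k + 1) : ℝ) := by
      intro k; rw [Nat.choose_succ_succ]; push_cast; ring
    have hsplit : ∑ k ∈ Finset.range (n + 1), ((n + 1).choose (k + 1) : ℝ) * F (k + 1)
        = (∑ k ∈ Finset.range (n + 1), (n.choose k : ℝ) * F (k + 1))
          + ∑ k ∈ Finset.range (n + 1), (n.choose (k + 1) : ℝ) * F (k + 1) := by
      rw [← Finset.sum_add_distrib]
      exact Finset.sum_congr rfl fun k _ => by rw [hch]; ring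
    rw [hsplit]
    have h2 : (∑ k ∈ Finset.range (n + 1), (n.choose (k + 1) : ℝ) * F (k + 1))
        + ((n + 1).choose 0 : ℝ) * F 0
        = ∑ k ∈ Finset.range (n + 1), (n.choose k : ℝ) * F k := by
      have ha := Finset.sum_range_succ' (fun k => (n.choose k : ℝ) * F k) n
      have hb := Finset.sum_range_succ (fun k => (n.choose (k + 1) : ℝ) * F (k + 1)) n
      rw [ha, hb]
      simp [Nat.choose_succ_self]
    linarith [h2]

lemma wronskian_mul (m : ℕ) (f : ℝ → ℝ) (u : Fin m → ℝ → ℝ)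
    (hf : ContDiff ℝ (⊤ : ℕ∞) f) (hu : ∀ j, ContDiff ℝ (⊤ : ℕ∞) (u j)) (x : ℝ) :
    wronskian m (fun j y => f y * u j y) x = f x ^ m * wronskian m u x := by
  classical
  set B : Matrix (Fin m) (Fin m) ℝ := Matrix.of fun i k =>
    if (k : ℕ) ≤ (i : ℕ) then
      (((i : ℕ).choose (k : ℕ) : ℕ) : ℝ) * iteratedDeriv ((i : ℕ) - (k : ℕ)) f x
    else 0 with hB
  set C : Matrix (Fin m) (Fin m) ℝ := Matrix.of fun k j : Fin m =>
    iteratedDeriv (k : ℕ) (u j) x with hC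
  have hfact : (Matrix.of fun i j : Fin m =>
      iteratedDeriv (i : ℕ) (fun y => f y * u j y) x) = B * C := by
    ext i j
    have step1 : ∑ k : Fin m, B i k * C k j = ∑ k ∈ Finset.range m,
        (fun k : ℕ => if k ≤ (i : ℕ) then
          (((i : ℕ).choose k : ℕ) : ℝ) * iteratedDeriv ((i : ℕ) - k) f x
            * iteratedDeriv k (u j) x
        else 0) k := by
      refine Eq.trans ?_ (Fin.sum_univ_eq_sum_range _ m)
      refine Finset.sum_congr rfl fun k _ => ?_
      simp only [hB, hC, Matrix.of_apply]
      split <;> simp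
    rw [Matrix.of_apply, Matrix.mul_apply, step1,
      my_leibniz f (u j) hf (hu j) (i : ℕ) x]
    rw [← Finset.sum_range_reflect
      (fun k => ((i : ℕ).choose k : ℝ) * iteratedDeriv k f x
        * iteratedDeriv ((i : ℕ) - k) (u j) x) ((i : ℕ) + 1)]
    rw [← Finset.sum_subset (Finset.range_subset_range.2 (by omega : (i : ℕ) + 1 ≤ m))
      (fun k _ hk => by
        rw [Finset.mem_range, not_lt] at hk
        exact if_neg (by omega))]
    refine Finset.sum_congr rfl fun k hk => ?_
    rw [Finset.mem_range] at hk
    have hki : k ≤ (i : ℕ) := by omega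
    rw [if_pos hki]
    have e1 : (i : ℕ) + 1 - 1 - k = (i : ℕ) - k := by omega
    have e2 : (i : ℕ) - ((i : ℕ) - k) = k := by omega
    have e3 : (i : ℕ).choose ((i : ℕ) - k) = (i : ℕ).choose k := Nat.choose_symm hki
    rw [e1, e2, e3]
  have hBdet : B.det = f x ^ m := by
    rw [Matrix.det_of_lowerTriangular B (by
      intro i j hij
      have hij' : i < j := hij
      have : (i : ℕ) < (j : ℕ) := Fin.lt_def.mp hij'
      exact if_neg (by omega))]
    simp [hB, Nat.choose_self, iteratedDeriv_zero, Finset.prod_const, Finset.card_univ]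
  rw [wronskian, hfact, Matrix.det_mul, hBdet, wronskian, hC]

lemma wronskian_one_cons (m : ℕ) (v : Fin m → ℝ → ℝ) (x : ℝ) :
    wronskian (m + 1)
      (fun j y => if h : (j : ℕ) = 0 then 1
        else v ⟨(j : ℕ) - 1, by have := j.isLt; omega⟩ y) x
      = wronskian m (fun i => deriv (v i)) x := by
  classical
  rw [wronskian, Matrix.det_succ_column_zero]
  have hcol : ∀ i : Fin (m + 1),
      (Matrix.of fun i j : Fin (m + 1) => iteratedDeriv (i : ℕ)
        (fun y => if h : (j : ℕ) = 0 then (1 : ℝ)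
          else v ⟨(j : ℕ) - 1, by have := j.isLt; omega⟩ y) x) i 0
      = if (i : ℕ) = 0 then 1 else 0 := by
    intro i
    have h0 : (fun y : ℝ => if h : (((0 : Fin (m + 1))) : ℕ) = 0 then (1 : ℝ)
        else v ⟨(((0 : Fin (m + 1))) : ℕ) - 1, by omega⟩ y) = fun _ => (1 : ℝ) := by
      funext y
      rw [dif_pos (by simp)]
    simp only [Matrix.of_apply, h0, iteratedDeriv_const']
  rw [Finset.sum_eq_single 0]
  · rw [hcol 0]
    norm_num
    rw [wronskian]
    congr 1
    apply Matrix.ext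
    intro k j
    simp only [Matrix.submatrix_apply, Matrix.of_apply, Fin.succAbove_zero, Fin.val_succ]
    rw [iteratedDeriv_succ']
    congr 2
  · intro i _ hi
    rw [hcol i, if_neg (fun hvi => hi (Fin.ext (by simp [hvi])))]
    ring
  · intro h
    exact absurd (Finset.mem_univ _) h

theorem stmt2 (n : ℕ) (hn : 2 ≤ n) (f : ℝ → ℝ) (g : Fin (n - 1) → ℝ → ℝ)
    (hf : ContDiff ℝ (⊤ : ℕ∞) f) (hg : ∀ i, ContDiff ℝ (⊤ : ℕ∞) (g i)) (x : ℝ) :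
    wronskian n
        (fun j y =>
          if h : (j : ℕ) = 0 then f y
          else f y * g ⟨(j : ℕ) - 1, by have := j.isLt; omega⟩ y) x =
      f x ^ n * wronskian (n - 1) (fun i => deriv (g i)) x := by
  obtain ⟨m, rfl⟩ : ∃ m, n = m + 1 := ⟨n - 1, by omega⟩
  have heq : (fun (j : Fin (m + 1)) (y : ℝ) =>
      if h : (j : ℕ) = 0 then f y
      else f y * g ⟨(j : ℕ) - 1, by have := j.isLt; omega⟩ y)
      = fun (j : Fin (m + 1)) (y : ℝ) => f y * (if h : (j : ℕ) = 0 then 1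
        else g ⟨(j : ℕ) - 1, by have := j.isLt; omega⟩ y) := by
    funext j y
    by_cases h : (j : ℕ) = 0 <;> simp [h]
  rw [heq]
  rw [wronskian_mul (m + 1) f _ hf (fun j => by
    by_cases h : (j : ℕ) = 0
    · have : (fun y : ℝ => if h : (j : ℕ) = 0 then (1 : ℝ)
          else g ⟨(j : ℕ) - 1, by have := j.isLt; omega⟩ y) = fun _ => 1 := by
        funext y; rw [dif_pos h]
      rw [this]; exact contDiff_const
    · have : (fun y : ℝ => if h : (j : ℕ) = 0 then (1 : ℝ)
          else g ⟨(j : ℕ) - 1, by have := j.isLt; omega⟩ y)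
          = fun y => g ⟨(j : ℕ) - 1, by have := j.isLt; omega⟩ y := by
        funext y; rw [dif_neg h]
      rw [this]; exact hg _) x]
  rw [wronskian_one_cons m g x]
  rfl
end

section
/- For all integers n ≥ 2 and all real x, W_n^{(1)}(x) = (−2)^{n−1} · n · (n−2)! · (sin x)^n · W_{n−1}^{(1)}(x). -/
open Real Finset

section WronskianProof
open Polynomial
namespace WAux


/-- Chebyshev-like polynomials of the second kind: `Pc m` evaluated at `cos θ`
times `sin θ` gives `sin ((m+1) θ)`. -/
noncomputable def Pc : ℕ → ℝ[X]
  | 0 => 1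
  | 1 => 2 * X
  | (n+2) => 2 * X * Pc (n+1) - Pc n

lemma Pc_add_two (n : ℕ) : Pc (n+2) = 2 * X * Pc (n+1) - Pc n := rfl

lemma Pc_eval (m : ℕ) (θ : ℝ) :
    (Pc m).eval (Real.cos θ) * Real.sin θ = Real.sin (((m : ℝ) + 1) * θ) := by
  induction m using Nat.twoStepInduction with
  | zero => simp [Pc]
  | one =>
      simp only [Pc, eval_mul, eval_ofNat, eval_X]
      rw [show ((1:ℕ):ℝ) + 1 = 2 by norm_num, Real.sin_two_mul]
      ring
  | more n ih1 ih2 =>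
      rw [Pc_add_two]
      have h1 : (((n+2:ℕ):ℝ) + 1) * θ = (((n+1:ℕ):ℝ) + 1) * θ + θ := by push_cast; ring
      have h2 : (((n:ℕ):ℝ) + 1) * θ = (((n+1:ℕ):ℝ) + 1) * θ - θ := by push_cast; ring
      rw [h1, Real.sin_add]
      simp only [eval_sub, eval_mul, eval_ofNat, eval_X]
      have ih2' := ih2
      rw [h2, Real.sin_sub] at ih1
      linear_combination (2 * Real.cos θ) * ih2' - ih1

lemma Pc_natDegree_le (m : ℕ) : (Pc m).natDegree ≤ m := by
  induction m using Nat.twoStepInduction with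
  | zero => simp [Pc]
  | one =>
      refine le_trans (natDegree_mul_le) ?_
      simp
  | more n ih1 ih2 =>
      rw [Pc_add_two]
      refine le_trans (natDegree_sub_le _ _) (max_le ?_ (by omega))
      refine le_trans (natDegree_mul_le) ?_
      have : (2 * X : ℝ[X]).natDegree ≤ 1 := le_trans natDegree_mul_le (by simp)
      omega

lemma Pc_coeff_eq_zero {m k : ℕ} (h : m < k) : (Pc m).coeff k = 0 :=
  coeff_eq_zero_of_natDegree_lt (lt_of_le_of_lt (Pc_natDegree_le m) h)

lemma two_X_mul_coeff (p : ℝ[X]) (k : ℕ) :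
    (2 * X * p).coeff (k + 1) = 2 * p.coeff k := by
  have h : (2 * X * p : ℝ[X]) = X * p + X * p := by ring
  rw [h, coeff_add, coeff_X_mul]
  ring

lemma Pc_coeff_self (m : ℕ) : (Pc m).coeff m = 2 ^ m := by
  induction m using Nat.twoStepInduction with
  | zero => simp [Pc]
  | one =>
      show (2 * X : ℝ[X]).coeff 1 = 2 ^ 1
      have := two_X_mul_coeff (1 : ℝ[X]) 0
      simpa using by simp [coeff_one]; norm_num
  | more n ih1 ih2 =>
      rw [Pc_add_two, coeff_sub, show n + 2 = (n+1) + 1 from rfl, two_X_mul_coeff,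
        ih2, Pc_coeff_eq_zero (show n < n + 1 + 1 by omega)]
      ring

lemma Pc_coeff_pred (m : ℕ) : (Pc (m + 1)).coeff m = 0 := by
  induction m using Nat.twoStepInduction with
  | zero =>
      show (2 * X : ℝ[X]).coeff 0 = 0
      simp
  | one =>
      show (Pc 2).coeff 1 = 0
      rw [Pc_add_two, coeff_sub, show (2 * X * Pc (0+1) : ℝ[X]).coeff 1 = 2 * (Pc (0+1)).coeff 0 from two_X_mul_coeff _ 0]
      simp [Pc, coeff_one]
  | more n ih1 ih2 =>
      rw [show n + 2 + 1 = (n+2) + 1 from rfl, Pc_add_two, coeff_sub,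
        show n + 2 = (n+1) + 1 from rfl, two_X_mul_coeff, ih2,
        Pc_coeff_eq_zero (by omega)]
      ring



/-- Evaluate a 2-variable polynomial at `(cos x, sin x)`. -/
noncomputable def ev (q : MvPolynomial (Fin 2) ℝ) (x : ℝ) : ℝ :=
  MvPolynomial.eval ![Real.cos x, Real.sin x] q

/-- The derivation corresponding to `d/dx` through `(cos x, sin x)`. -/
noncomputable def Dop (q : MvPolynomial (Fin 2) ℝ) : MvPolynomial (Fin 2) ℝ :=
  (- MvPolynomial.X 1) * MvPolynomial.pderiv 0 q + MvPolynomial.X 0 * MvPolynomial.pderiv 1 q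

lemma Dop_zero : Dop 0 = 0 := by simp [Dop]

lemma ev_hasDerivAt (q : MvPolynomial (Fin 2) ℝ) (x : ℝ) :
    HasDerivAt (fun y => ev q y) (ev (Dop q) x) x := by
  induction q using MvPolynomial.induction_on with
  | C a =>
      have h1 : (fun y => ev (MvPolynomial.C a) y) = fun _ => a := by funext y; simp [ev]
      have h2 : ev (Dop (MvPolynomial.C a)) x = 0 := by simp [ev, Dop]
      rw [h1, h2]; exact hasDerivAt_const x a
  | add p q hp hq =>
      have h1 : (fun y => ev (p + q) y) = fun y => ev p y + ev q y := by
        funext y; simp [ev]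
      have h2 : ev (Dop (p + q)) x = ev (Dop p) x + ev (Dop q) x := by
        simp only [ev, Dop, map_add]; ring_nf
        simp [MvPolynomial.eval_mul]
        ring
      rw [h1, h2]; exact hp.add hq
  | mul_X p i hp =>
      fin_cases i
      · show HasDerivAt (fun y => ev (p * MvPolynomial.X 0) y) (ev (Dop (p * MvPolynomial.X 0)) x) x
        have h1 : (fun y => ev (p * MvPolynomial.X 0) y) = fun y => ev p y * Real.cos y := by
          funext y; simp [ev]
        have h2 : ev (Dop (p * MvPolynomial.X 0)) x
            = ev (Dop p) x * Real.cos x + ev p x * (-Real.sin x) := by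
          simp only [ev, Dop, MvPolynomial.pderiv_mul, MvPolynomial.pderiv_X]
          simp [MvPolynomial.eval_mul]
          ring
        rw [h1, h2]; exact hp.mul (Real.hasDerivAt_cos x)
      · show HasDerivAt (fun y => ev (p * MvPolynomial.X 1) y) (ev (Dop (p * MvPolynomial.X 1)) x) x
        have h1 : (fun y => ev (p * MvPolynomial.X 1) y) = fun y => ev p y * Real.sin y := by
          funext y; simp [ev]
        have h2 : ev (Dop (p * MvPolynomial.X 1)) x
            = ev (Dop p) x * Real.sin x + ev p x * Real.cos x := by
          simp only [ev, Dop, MvPolynomial.pderiv_mul, MvPolynomial.pderiv_X]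
          simp [MvPolynomial.eval_mul]
          ring
        rw [h1, h2]; exact hp.mul (Real.hasDerivAt_sin x)

/-- Coefficient polynomials for iterated derivatives of `x ↦ p(cos x) sin x`. -/
noncomputable def QQ : ℕ → ℕ → MvPolynomial (Fin 2) ℝ
  | 0, 0 => MvPolynomial.X 1
  | 0, _+1 => 0
  | i+1, 0 => Dop (QQ i 0)
  | i+1, j+1 => Dop (QQ i (j+1)) - MvPolynomial.X 1 * QQ i j

lemma QQ_eq_zero : ∀ i j, i < j → QQ i j = 0 := by
  intro i
  induction i with
  | zero => intro j hj; match j, hj with | (k+1), _ => rfl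
  | succ i ih =>
      intro j hj
      match j, hj with
      | (k+1), hj =>
        show Dop (QQ i (k+1)) - MvPolynomial.X 1 * QQ i k = 0
        rw [ih (k+1) (by omega), ih k (by omega), Dop_zero]
        ring

lemma QQ_diag (i : ℕ) : QQ i i = (-1)^i * (MvPolynomial.X 1)^(i+1) := by
  induction i with
  | zero => show MvPolynomial.X 1 = _; simp
  | succ i ih =>
      show Dop (QQ i (i+1)) - MvPolynomial.X 1 * QQ i i = (-1)^(i+1) * (MvPolynomial.X 1)^(i+1+1)
      rw [QQ_eq_zero i (i+1) (by omega), Dop_zero, ih]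
      ring

lemma ev_zero (x : ℝ) : ev 0 x = 0 := by simp [ev]

/-- Key lemma: iterated derivatives of `x ↦ q(cos x)·sin x`. -/
lemma key (q : ℝ[X]) (i : ℕ) :
    iteratedDeriv i (fun y => q.eval (Real.cos y) * Real.sin y) =
      fun y => ∑ j ∈ range (i+1),
        ev (QQ i j) y * (Polynomial.derivative^[j] q).eval (Real.cos y) := by
  induction i with
  | zero =>
      funext y
      simp [iteratedDeriv_zero, ev, QQ]
      ring
  | succ i ih =>
      rw [iteratedDeriv_succ, ih]
      funext y
      have hterm : ∀ j, HasDerivAt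
          (fun z => ev (QQ i j) z * (Polynomial.derivative^[j] q).eval (Real.cos z))
          (ev (Dop (QQ i j)) y * (Polynomial.derivative^[j] q).eval (Real.cos y)
            + ev (QQ i j) y * ((Polynomial.derivative^[j+1] q).eval (Real.cos y) * (-Real.sin y))) y := by
        intro j
        have h2 : HasDerivAt (fun z => (Polynomial.derivative^[j] q).eval (Real.cos z))
            ((Polynomial.derivative^[j+1] q).eval (Real.cos y) * (-Real.sin y)) y := by
          have := ((Polynomial.derivative^[j] q).hasDerivAt (Real.cos y)).comp y (Real.hasDerivAt_cos y)
          rwa [Function.iterate_succ_apply']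
        exact (ev_hasDerivAt (QQ i j) y).mul h2
      have hsum : HasDerivAt (fun z => ∑ j ∈ range (i+1),
            ev (QQ i j) z * (Polynomial.derivative^[j] q).eval (Real.cos z))
          (∑ j ∈ range (i+1),
            (ev (Dop (QQ i j)) y * (Polynomial.derivative^[j] q).eval (Real.cos y)
              + ev (QQ i j) y * ((Polynomial.derivative^[j+1] q).eval (Real.cos y) * (-Real.sin y)))) y :=
        HasDerivAt.fun_sum (fun j _ => hterm j)
      rw [hsum.deriv]
      have hlast : ev (Dop (QQ i (i+1))) y = 0 := by
        rw [QQ_eq_zero i (i+1) (by omega), Dop_zero, ev_zero]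
      have hsucc : ∀ j : ℕ, ev (QQ (i+1) (j+1)) y
          = ev (Dop (QQ i (j+1))) y - Real.sin y * ev (QQ i j) y := by
        intro j
        show ev (Dop (QQ i (j+1)) - MvPolynomial.X 1 * QQ i j) y = _
        simp [ev]
      rw [Finset.sum_add_distrib,
        Finset.sum_range_succ' (fun j => ev (QQ (i+1) j) y * (Polynomial.derivative^[j] q).eval (Real.cos y)) (i+1),
        Finset.sum_range_succ' (fun j => ev (Dop (QQ i j)) y * (Polynomial.derivative^[j] q).eval (Real.cos y)) i]
      have h0 : ev (QQ (i+1) 0) y = ev (Dop (QQ i 0)) y := rfl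
      rw [h0]
      have hR : ∑ j ∈ range (i+1), ev (QQ (i+1) (j+1)) y * (Polynomial.derivative^[j+1] q).eval (Real.cos y)
          = ∑ j ∈ range (i+1),
              (ev (Dop (QQ i (j+1))) y * (Polynomial.derivative^[j+1] q).eval (Real.cos y)
                + ev (QQ i j) y * ((Polynomial.derivative^[j+1] q).eval (Real.cos y) * (-Real.sin y))) := by
        refine Finset.sum_congr rfl fun j _ => ?_
        rw [hsucc j]; ring
      rw [hR, Finset.sum_add_distrib,
        Finset.sum_range_succ (fun j => ev (Dop (QQ i (j+1))) y * (Polynomial.derivative^[j+1] q).eval (Real.cos y)) i,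
        hlast, zero_mul, add_zero]
      ring


noncomputable def ee (N : ℕ) (j : Fin (N+1)) : ℕ := if (j:ℕ) = N then N+1 else (j:ℕ)

noncomputable def Lm (N : ℕ) (x : ℝ) : Matrix (Fin (N+1)) (Fin (N+1)) ℝ :=
  Matrix.of fun i k => ev (QQ (i:ℕ) (k:ℕ)) x

noncomputable def Hm (N : ℕ) (x : ℝ) : Matrix (Fin (N+1)) (Fin (N+1)) ℝ :=
  Matrix.of fun k j =>
    (Polynomial.derivative^[(k:ℕ)] (Pc (ee N j))).eval (Real.cos x)

lemma W_eq (N : ℕ) (x : ℝ) : W (N+1) 1 x = (Lm N x * Hm N x).det := by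
  have hM : (Matrix.of fun i j : Fin (N+1) =>
      iteratedDeriv (i:ℕ) (fun y =>
        if (j : ℕ) = (N+1) - 1 then Real.sin (((N+1+1 : ℕ) : ℝ) * y)
        else Real.sin ((((j : ℕ) + 1 : ℕ) : ℝ) * y)) x) = Lm N x * Hm N x := by
    ext i j
    have hu : (fun y =>
        if (j : ℕ) = (N+1) - 1 then Real.sin (((N+1+1 : ℕ) : ℝ) * y)
        else Real.sin ((((j : ℕ) + 1 : ℕ) : ℝ) * y))
        = fun y => (Pc (ee N j)).eval (Real.cos y) * Real.sin y := by
      funext y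
      by_cases h : (j : ℕ) = N
      · rw [if_pos (by omega), ee, if_pos h, Pc_eval]
        push_cast; ring_nf
      · rw [if_neg (by omega), ee, if_neg h, Pc_eval]
        push_cast; ring_nf
    rw [Matrix.of_apply, hu, Matrix.mul_apply]
    have hk := congrFun (key (Pc (ee N j)) (i:ℕ)) x
    rw [hk]
    have hsub : ∑ k ∈ range ((i:ℕ)+1),
        ev (QQ (i:ℕ) k) x * (Polynomial.derivative^[k] (Pc (ee N j))).eval (Real.cos x)
        = ∑ k ∈ range (N+1),
        ev (QQ (i:ℕ) k) x * (Polynomial.derivative^[k] (Pc (ee N j))).eval (Real.cos x) := by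
      refine Finset.sum_subset (by intro a ha; simp at ha ⊢; omega) ?_
      intro k hk1 hk2
      simp only [Finset.mem_range] at hk1 hk2
      rw [QQ_eq_zero (i:ℕ) k (by omega), ev_zero, zero_mul]
    rw [hsub, ← Fin.sum_univ_eq_sum_range
      (fun k => ev (QQ (i:ℕ) k) x * (Polynomial.derivative^[k] (Pc (ee N j))).eval (Real.cos x)) (N+1)]
    rfl
  unfold W _root_.wronskian
  exact congrArg Matrix.det hM

lemma det_Lm (N : ℕ) (x : ℝ) :
    (Lm N x).det = ∏ i ∈ range (N+1), ((-1:ℝ)^i * (Real.sin x)^(i+1)) := by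
  have htri : (Lm N x).BlockTriangular OrderDual.toDual := by
    intro i j hij
    have : (i:ℕ) < (j:ℕ) := hij
    show ev (QQ (i:ℕ) (j:ℕ)) x = 0
    rw [QQ_eq_zero _ _ this, ev_zero]
  rw [Matrix.det_of_lowerTriangular _ htri]
  rw [← Fin.prod_univ_eq_prod_range (fun i => ((-1:ℝ)^i * (Real.sin x)^(i+1))) (N+1)]
  refine Finset.prod_congr rfl fun i _ => ?_
  show ev (QQ (i:ℕ) (i:ℕ)) x = _
  rw [QQ_diag]
  simp [ev]


lemma taylor_coeff_high {p : ℝ[X]} {d : ℕ} (h : p.natDegree ≤ d) (r : ℝ) :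
    (Polynomial.taylor r p).coeff d = p.coeff d := by
  rw [Polynomial.taylor_coeff]
  have hC : Polynomial.hasseDeriv d p = Polynomial.C (p.coeff d) := by
    ext m
    rw [Polynomial.hasseDeriv_coeff, Polynomial.coeff_C]
    cases m with
    | zero => simp
    | succ m =>
        rw [coeff_eq_zero_of_natDegree_lt (by omega), if_neg (by omega)]
        simp
  rw [hC, Polynomial.eval_C]

lemma derivN_eval (N : ℕ) (t : ℝ) :
    (Polynomial.derivative^[N] (Pc (N+1))).eval t
      = 2^(N+1) * (((N+1).factorial : ℕ) : ℝ) * t := by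
  have hdeg : (Polynomial.derivative^[N] (Pc (N+1))).natDegree < 2 := by
    have h1 := Polynomial.natDegree_iterate_derivative (Pc (N+1)) N
    have h2 := Pc_natDegree_le (N+1)
    omega
  rw [Polynomial.eval_eq_sum_range' hdeg]
  rw [Finset.sum_range_succ, Finset.sum_range_one]
  rw [Polynomial.coeff_iterate_derivative, Polynomial.coeff_iterate_derivative]
  have hfac : (N+1).descFactorial N = (N+1).factorial := by
    have h := Nat.descFactorial_self (N+1)
    rw [Nat.descFactorial_succ] at h
    simpa using h
  rw [show 0 + N = N from by omega, Pc_coeff_pred, show 1 + N = N + 1 from by omega,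
    Pc_coeff_self, hfac]
  rw [nsmul_eq_mul, nsmul_eq_mul]
  push_cast
  ring

noncomputable def qb (N : ℕ) (t : ℝ) (d : Fin (N+1)) : ℝ[X] :=
  if (d:ℕ) = N then Pc (N+1) else (Polynomial.X - Polynomial.C t)^(d:ℕ)

noncomputable def Km (N : ℕ) (x : ℝ) : Matrix (Fin (N+1)) (Fin (N+1)) ℝ :=
  Matrix.of fun k d => (Polynomial.derivative^[(k:ℕ)] (qb N (Real.cos x) d)).eval (Real.cos x)

noncomputable def Bm (N : ℕ) (x : ℝ) : Matrix (Fin (N+1)) (Fin (N+1)) ℝ :=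
  Matrix.of fun d j => if (j:ℕ) = N then (if (d:ℕ) = N then (1:ℝ) else 0)
    else (Polynomial.taylor (Real.cos x) (Pc (j:ℕ))).coeff (d:ℕ)

lemma Km_apply_lt (N : ℕ) (x : ℝ) (k d : Fin (N+1)) (hd : (d:ℕ) ≠ N) :
    Km N x k d = if (k:ℕ) = (d:ℕ) then (((d:ℕ).factorial : ℕ) : ℝ) else 0 := by
  show (Polynomial.derivative^[(k:ℕ)] (qb N (Real.cos x) d)).eval (Real.cos x) = _
  rw [qb, if_neg hd, Polynomial.iterate_derivative_X_sub_pow]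
  rcases lt_trichotomy (k:ℕ) (d:ℕ) with h | h | h
  · rw [if_neg (by omega)]
    simp [sub_self, zero_pow (show (d:ℕ) - (k:ℕ) ≠ 0 by omega)]
  · rw [if_pos h, h, Nat.sub_self, pow_zero, Nat.descFactorial_self]
    simp [nsmul_eq_mul]
  · rw [if_neg (by omega)]
    rw [Nat.descFactorial_eq_zero_iff_lt.mpr h]
    simp

lemma Hm_eq (N : ℕ) (x : ℝ) : Hm N x = Km N x * Bm N x := by
  ext k j
  rw [Matrix.mul_apply]
  show (Polynomial.derivative^[(k:ℕ)] (Pc (ee N j))).eval (Real.cos x) = _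
  set t := Real.cos x with ht
  by_cases hj : (j:ℕ) = N
  · have hBm : ∀ d : Fin (N+1), Bm N x d j = if d = Fin.last N then (1:ℝ) else 0 := by
      intro d
      show (if (j:ℕ) = N then (if (d:ℕ) = N then (1:ℝ) else 0)
        else (Polynomial.taylor t (Pc (j:ℕ))).coeff (d:ℕ)) = _
      rw [if_pos hj]
      congr 1
      simp [Fin.ext_iff, Fin.val_last]
    have hsum : ∑ d : Fin (N+1), Km N x k d * Bm N x d j = Km N x k (Fin.last N) := by
      rw [Finset.sum_congr rfl (fun d _ => by rw [hBm d, mul_ite, mul_one, mul_zero])]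
      rw [Finset.sum_ite_eq' Finset.univ (Fin.last N) (fun d => Km N x k d)]
      simp
    rw [hsum]
    show _ = (Polynomial.derivative^[(k:ℕ)] (qb N t (Fin.last N))).eval t
    rw [qb, if_pos (Fin.val_last N), ee, if_pos hj]
  · have hjN : (j:ℕ) < N := by have := j.isLt; omega
    have hdegj : (Pc (j:ℕ)).natDegree < N + 1 :=
      lt_of_le_of_lt (Pc_natDegree_le _) (by omega)
    have hexp : Pc (j:ℕ) = ∑ d ∈ range (N+1),
        Polynomial.C ((Polynomial.taylor t (Pc (j:ℕ))).coeff d)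
          * (Polynomial.X - Polynomial.C t)^d := by
      conv_lhs => rw [← Polynomial.sum_taylor_eq (Pc (j:ℕ)) t]
      rw [Polynomial.sum_over_range' _ (fun n => by simp) (N+1)
        (by rw [Polynomial.natDegree_taylor]; exact hdegj)]
    have hterm : ∀ d : Fin (N+1), Km N x k d * Bm N x d j
        = (Polynomial.derivative^[(k:ℕ)] ((Polynomial.X - Polynomial.C t)^(d:ℕ))).eval t
          * ((Polynomial.taylor t (Pc (j:ℕ))).coeff (d:ℕ)) := by
      intro d
      by_cases hd : (d:ℕ) = N
      · have hco : (Polynomial.taylor t (Pc (j:ℕ))).coeff (d:ℕ) = 0 := by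
          apply Polynomial.coeff_eq_zero_of_natDegree_lt
          rw [Polynomial.natDegree_taylor]
          exact lt_of_le_of_lt (Pc_natDegree_le _) (by omega)
        have hBm : Bm N x d j = 0 := by
          show (if (j:ℕ) = N then _ else _) = (0:ℝ)
          rw [if_neg hj]; exact hco
        rw [hBm, hco, mul_zero, mul_zero]
      · have hBm : Bm N x d j = (Polynomial.taylor t (Pc (j:ℕ))).coeff (d:ℕ) := by
          show (if (j:ℕ) = N then _ else _) = _
          rw [if_neg hj]
        have hKm2 : Km N x k d
            = (Polynomial.derivative^[(k:ℕ)] ((Polynomial.X - Polynomial.C t)^(d:ℕ))).eval t := by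
          show (Polynomial.derivative^[(k:ℕ)] (qb N t d)).eval t = _
          rw [qb, if_neg hd]
        rw [hKm2, hBm]
    rw [Finset.sum_congr rfl (fun d _ => hterm d)]
    rw [Fin.sum_univ_eq_sum_range (fun d =>
      (Polynomial.derivative^[(k:ℕ)] ((Polynomial.X - Polynomial.C t)^d)).eval t
        * ((Polynomial.taylor t (Pc (j:ℕ))).coeff d)) (N+1)]
    have hee : ee N j = (j:ℕ) := by rw [ee, if_neg hj]
    rw [hee]
    conv_lhs => rw [hexp]
    rw [Polynomial.iterate_derivative_sum, Polynomial.eval_finset_sum]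
    refine Finset.sum_congr rfl fun d _ => ?_
    rw [Polynomial.iterate_derivative_C_mul, Polynomial.eval_mul, Polynomial.eval_C]
    ring

lemma det_Bm (N : ℕ) (x : ℝ) : (Bm N x).det = ∏ d ∈ range N, (2:ℝ)^d := by
  have htri : (Bm N x).BlockTriangular id := by
    intro d j hdj
    have h1 : (j:ℕ) < (d:ℕ) := hdj
    have hjN : (j:ℕ) ≠ N := by have := d.isLt; omega
    show (if (j:ℕ) = N then _ else _) = (0:ℝ)
    rw [if_neg hjN]
    apply Polynomial.coeff_eq_zero_of_natDegree_lt
    rw [Polynomial.natDegree_taylor]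
    exact lt_of_le_of_lt (Pc_natDegree_le _) h1
  rw [Matrix.det_of_upperTriangular htri]
  rw [Fin.prod_univ_castSucc]
  have hlast : Bm N x (Fin.last N) (Fin.last N) = 1 := by
    show (if ((Fin.last N : Fin (N+1)):ℕ) = N then _ else _) = (1:ℝ)
    rw [if_pos (Fin.val_last N), if_pos (Fin.val_last N)]
  rw [hlast, mul_one]
  rw [← Fin.prod_univ_eq_prod_range (fun d => (2:ℝ)^d) N]
  refine Finset.prod_congr rfl fun d _ => ?_
  have hdN : ((Fin.castSucc d : Fin (N+1)):ℕ) ≠ N := by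
    simp [Fin.coe_castSucc]; omega
  show (if ((Fin.castSucc d : Fin (N+1)):ℕ) = N then _ else _) = (2:ℝ)^(d:ℕ)
  rw [if_neg hdN]
  rw [taylor_coeff_high (by simpa [Fin.coe_castSucc] using Pc_natDegree_le (d:ℕ))]
  simp [Fin.coe_castSucc, Pc_coeff_self]

lemma det_Km (N : ℕ) (x : ℝ) :
    (Km N x).det = (∏ d ∈ range N, ((d.factorial : ℕ) : ℝ))
      * (2^(N+1) * (((N+1).factorial : ℕ) : ℝ) * Real.cos x) := by
  set t := Real.cos x with ht
  set A := (Km N x).transpose with hA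
  set lastI : Fin (N+1) := Fin.last N with hlastI
  set c : Fin (N+1) → ℝ := fun k =>
    -((Polynomial.derivative^[(k:ℕ)] (Pc (N+1))).eval t / (((k:ℕ).factorial : ℕ) : ℝ)) with hc
  have haux := Matrix.det_updateRow_sum_aux A
    (Finset.univ.erase lastI) (Finset.notMem_erase lastI Finset.univ) c 1
  have hAlast : ∀ jj : Fin (N+1), A lastI jj
      = (Polynomial.derivative^[(jj:ℕ)] (Pc (N+1))).eval t := by
    intro jj
    show (Polynomial.derivative^[(jj:ℕ)] (qb N t lastI)).eval t = _
    rw [qb, if_pos (Fin.val_last N)]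
  have hAk : ∀ kk : Fin (N+1), (kk:ℕ) ≠ N → ∀ jj : Fin (N+1),
      A kk jj = if (jj:ℕ) = (kk:ℕ) then (((kk:ℕ).factorial : ℕ) : ℝ) else 0 := by
    intro kk hkk jj
    exact Km_apply_lt N x jj kk hkk
  have hdiag : A.updateRow lastI ((1:ℝ) • A lastI + ∑ k ∈ Finset.univ.erase lastI, c k • A k)
      = Matrix.diagonal (fun d : Fin (N+1) =>
          if (d:ℕ) = N then 2^(N+1) * (((N+1).factorial : ℕ) : ℝ) * t
          else (((d:ℕ).factorial : ℕ) : ℝ)) := by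
    have lastv : ((Fin.last N : Fin (N+1)) : ℕ) = N := Fin.val_last N
    ext d j
    rw [Matrix.updateRow_apply]
    by_cases hd : d = lastI
    · rw [if_pos hd]
      simp only [Pi.add_apply, Pi.smul_apply, Finset.sum_apply, one_smul, smul_eq_mul]
      by_cases hj : j = lastI
      · have hzero : ∀ k ∈ Finset.univ.erase lastI, c k * A k j = 0 := by
          intro k hk
          have hkN : (k:ℕ) ≠ N := by
            intro h
            exact (Finset.mem_erase.mp hk).1 (Fin.ext (by rw [h, hlastI, lastv]))
          have hjk : ¬((j:ℕ) = (k:ℕ)) := by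
            rw [hj, hlastI, lastv]; omega
          rw [hAk k hkN j, if_neg hjk, mul_zero]
        rw [Finset.sum_congr rfl hzero, Finset.sum_const_zero, add_zero, hAlast j, hd, hj,
          Matrix.diagonal_apply_eq, if_pos (by rw [hlastI, lastv]), hlastI, lastv]
        exact derivN_eval N t
      · have hjN : (j:ℕ) ≠ N := by
          intro h
          exact hj (Fin.ext (by rw [h, hlastI, lastv]))
        have hsum : ∑ k ∈ Finset.univ.erase lastI, c k * A k j
            = c j * (((j:ℕ).factorial : ℕ) : ℝ) := by
          rw [Finset.sum_eq_single j]
          · rw [hAk j hjN j, if_pos rfl]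
          · intro k hk hkj
            have hkN : (k:ℕ) ≠ N := by
              intro h
              exact (Finset.mem_erase.mp hk).1 (Fin.ext (by rw [h, hlastI, lastv]))
            have hjk : ¬((j:ℕ) = (k:ℕ)) := fun h => hkj (Fin.ext h).symm
            rw [hAk k hkN j, if_neg hjk, mul_zero]
          · intro hj2
            exact absurd (Finset.mem_erase.mpr ⟨hj, Finset.mem_univ j⟩) hj2
        have hjd : d ≠ j := by rw [hd]; exact fun h => hj h.symm
        rw [hsum, hAlast j, Matrix.diagonal_apply_ne _ hjd, hc]
        have hfne : (((j:ℕ).factorial : ℕ) : ℝ) ≠ 0 := by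
          exact_mod_cast Nat.factorial_ne_zero (j:ℕ)
        field_simp
        ring
    · rw [if_neg hd]
      have hdN : (d:ℕ) ≠ N := by
        intro h
        exact hd (Fin.ext (by rw [h, hlastI, lastv]))
      rw [hAk d hdN j]
      by_cases hjd : j = d
      · rw [if_pos (by rw [hjd]), hjd, Matrix.diagonal_apply_eq, if_neg hdN]
      · rw [if_neg (fun h => hjd (Fin.ext h)),
          Matrix.diagonal_apply_ne _ (fun h => hjd h.symm)]
  have haux2 : (Matrix.diagonal (fun d : Fin (N+1) =>
      if (d:ℕ) = N then 2^(N+1) * (((N+1).factorial : ℕ) : ℝ) * t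
      else (((d:ℕ).factorial : ℕ) : ℝ))).det = (1:ℝ) • A.det := by
    rw [← hdiag]; exact haux
  rw [Matrix.det_diagonal] at haux2
  have hAdet : A.det = (Km N x).det := Matrix.det_transpose (Km N x)
  rw [hAdet, one_smul] at haux2
  rw [← haux2, Fin.prod_univ_castSucc]
  have h1 : ∀ d : Fin N, ((Fin.castSucc d : Fin (N+1)):ℕ) ≠ N := by
    intro d; simp [Fin.coe_castSucc]; omega
  have h2 : (∏ d : Fin N, (if ((Fin.castSucc d : Fin (N+1)):ℕ) = N
        then 2^(N+1) * (((N+1).factorial : ℕ) : ℝ) * t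
        else ((((Fin.castSucc d : Fin (N+1)):ℕ).factorial : ℕ) : ℝ)))
      = ∏ d ∈ range N, ((d.factorial : ℕ) : ℝ) := by
    rw [← Fin.prod_univ_eq_prod_range (fun d => ((d.factorial : ℕ) : ℝ)) N]
    refine Finset.prod_congr rfl fun d _ => ?_
    rw [if_neg (h1 d)]
    simp [Fin.coe_castSucc]
  rw [h2, if_pos (Fin.val_last N)]



lemma closedForm (N : ℕ) (x : ℝ) :
    W (N+1) 1 x = (∏ i ∈ range (N+1), ((-1:ℝ)^i * Real.sin x^(i+1)))
      * (∏ d ∈ range N, ((2:ℝ)^d * ((d.factorial : ℕ) : ℝ)))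
      * (2^(N+1) * (((N+1).factorial : ℕ) : ℝ) * Real.cos x) := by
  rw [W_eq, Matrix.det_mul, det_Lm, Hm_eq, Matrix.det_mul, det_Km, det_Bm,
    Finset.prod_mul_distrib, Finset.prod_mul_distrib]
  ring

end WAux
end WronskianProof

theorem stmt4 (n : ℕ) (hn : 2 ≤ n) (x : ℝ) :
    W n 1 x =
      (-2 : ℝ) ^ (n - 1) * (n : ℝ) * ((n - 2).factorial : ℝ) * Real.sin x ^ n *
        W (n - 1) 1 x := by
  obtain ⟨M, rfl⟩ : ∃ M, n = M + 2 := ⟨n - 2, by omega⟩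
  rw [show M + 2 - 1 = M + 1 by omega, show M + 2 - 2 = M by omega,
    show M + 2 = (M + 1) + 1 by omega, WAux.closedForm (M+1) x, WAux.closedForm M x,
    Finset.prod_range_succ (fun i => ((-1:ℝ)^i * Real.sin x^(i+1))) (M+1),
    Finset.prod_range_succ (fun d => ((2:ℝ)^d * ((d.factorial : ℕ) : ℝ))) M,
    Nat.factorial_succ (M+1),
    show ((-2:ℝ))^(M+1) = (-1)^(M+1) * 2^(M+1) by rw [← neg_one_mul, mul_pow]]
  push_cast
  ring
end

section
/- For all integers n ≥ 2 and k ≥ 0 and all real x, W_n^{(k+2)}(x) = W_n^{(k)}(x) + (−2)^{n−1} · (n+k+1) · (n−2)! · (sin x)^n · W_{n−1}^{(k+2)}(x). -/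
open Real Finset

open Polynomial

noncomputable def AA : ℕ → ℕ → (ℝ → ℝ)
  | 0, 0 => Real.sin
  | 0, _+1 => fun _ => 0
  | i+1, 0 => deriv (AA i 0)
  | i+1, l+1 => fun x => deriv (AA i (l+1)) x + (-Real.sin x) * AA i l x

lemma AA_smooth (i l : ℕ) : ContDiff ℝ (⊤:ℕ∞) (AA i l) := by
  induction i generalizing l with
  | zero =>
    cases l with
    | zero => exact Real.contDiff_sin
    | succ l => exact contDiff_const
  | succ i ih =>
    cases l with
    | zero => exact (contDiff_infty_iff_deriv.mp (ih 0)).2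
    | succ l =>
      exact ((contDiff_infty_iff_deriv.mp (ih (l+1))).2).add
        ((Real.contDiff_sin.neg).mul (ih l))

lemma AA_zero {i l : ℕ} (h : i < l) : AA i l = fun _ => (0:ℝ) := by
  induction i generalizing l with
  | zero =>
    obtain ⟨l, rfl⟩ := Nat.exists_eq_add_of_lt h
    rfl
  | succ i ih =>
    obtain ⟨m, rfl⟩ : ∃ m, l = m + 1 := ⟨l - 1, by omega⟩
    show (fun x => deriv (AA i (m+1)) x + (-Real.sin x) * AA i m x) = _
    rw [ih (by omega : i < m + 1), ih (by omega : i < m)]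
    funext x
    simp

lemma AA_diag (i : ℕ) : AA i i = fun x => (-1:ℝ)^i * Real.sin x ^ (i+1) := by
  induction i with
  | zero => funext x; simp [AA]
  | succ i ih =>
    show (fun x => deriv (AA i (i+1)) x + (-Real.sin x) * AA i i x) = _
    rw [AA_zero (by omega : i < i + 1), ih]
    funext x
    simp only [deriv_const]
    ring

lemma AA_spec (p : ℝ[X]) (i : ℕ) (x : ℝ) :
    iteratedDeriv i (fun y => Real.sin y * p.eval (Real.cos y)) x
      = ∑ l ∈ range (i+1), AA i l x * (derivative^[l] p).eval (Real.cos x) := by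
  induction i generalizing x with
  | zero => simp [AA]
  | succ i ih =>
    rw [iteratedDeriv_succ]
    have hfun : iteratedDeriv i (fun y => Real.sin y * p.eval (Real.cos y))
        = fun y => ∑ l ∈ range (i+1), AA i l y * (derivative^[l] p).eval (Real.cos y) :=
      funext fun y => ih y
    rw [hfun]
    set E : ℕ → ℝ := fun l => (derivative^[l] p).eval (Real.cos x) with hE
    have hd : HasDerivAt (fun y => ∑ l ∈ range (i+1), AA i l y * (derivative^[l] p).eval (Real.cos y))
        (∑ l ∈ range (i+1), (deriv (AA i l) x * E l + AA i l x * (E (l+1) * (-Real.sin x)))) x := by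
      apply HasDerivAt.fun_sum
      intro l _
      have h1 : HasDerivAt (AA i l) (deriv (AA i l) x) x :=
        (((AA_smooth i l).differentiable (by simp)) x).hasDerivAt
      have h2 : HasDerivAt (fun y => (derivative^[l] p).eval (Real.cos y))
          (E (l+1) * (-Real.sin x)) x := by
        have := (Polynomial.hasDerivAt (derivative^[l] p) (Real.cos x)).comp x (Real.hasDerivAt_cos x)
        simpa [hE, Function.iterate_succ_apply', Function.comp_def] using this
      exact h1.mul h2
    rw [hd.deriv]
    have hsum : ∑ l ∈ range (i+1+1), AA (i+1) l x * E l
        = ∑ l ∈ range (i+1), AA (i+1) (l+1) x * E (l+1) + AA (i+1) 0 x * E 0 :=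
      Finset.sum_range_succ' _ _
    rw [hsum]
    have expand : ∑ l ∈ range (i+1), deriv (AA i l) x * E l
        = ∑ l ∈ range (i+1), deriv (AA i (l+1)) x * E (l+1) + deriv (AA i 0) x * E 0 := by
      have h2 : ∑ l ∈ range (i+1+1), deriv (AA i l) x * E l
          = ∑ l ∈ range (i+1), deriv (AA i (l+1)) x * E (l+1) + deriv (AA i 0) x * E 0 :=
        Finset.sum_range_succ' _ _
      rw [← h2, Finset.sum_range_succ (fun l => deriv (AA i l) x * E l) (i+1), AA_zero (Nat.lt_succ_self i)]
      simp
    rw [Finset.sum_add_distrib, expand]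
    have hAA0 : AA (i+1) 0 x = deriv (AA i 0) x := rfl
    rw [add_right_comm, hAA0, ← Finset.sum_add_distrib]
    congr 1
    apply Finset.sum_congr rfl
    intro l _
    have hAAs : AA (i+1) (l+1) x = deriv (AA i (l+1)) x + (-Real.sin x) * AA i l x := rfl
    rw [hAAs]
    ring

lemma evalDiag {p : ℝ[X]} {j : ℕ} (h : p.natDegree ≤ j) (t : ℝ) :
    (derivative^[j] p).eval t = (Nat.factorial j : ℝ) * p.coeff j := by
  have h0 : (derivative^[j] p).natDegree ≤ 0 :=
    (natDegree_iterate_derivative p j).trans (by omega)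
  rw [Polynomial.eq_C_of_natDegree_le_zero h0, eval_C, coeff_iterate_derivative]
  simp [Nat.descFactorial_self, mul_comm]

lemma master (M : ℕ) (v : ℕ → ℝ[X]) (hv : ∀ j, j < M → (v j).natDegree ≤ j) (x : ℝ) :
    wronskian (M+1) (fun j y => Real.sin y * (v (j:ℕ)).eval (Real.cos y)) x
    = (∏ i ∈ range (M+1), ((-1:ℝ)^i * Real.sin x ^ (i+1)))
      * ((∏ j ∈ range M, ((Nat.factorial j : ℝ) * (v j).coeff j))
         * (derivative^[M] (v M)).eval (Real.cos x)) := by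
  classical
  set Am : Matrix (Fin (M+1)) (Fin (M+1)) ℝ :=
    Matrix.of (fun i l => AA (i:ℕ) (l:ℕ) x) with hAm
  set P : Matrix (Fin (M+1)) (Fin (M+1)) ℝ :=
    Matrix.of (fun l j => (derivative^[(l:ℕ)] (v (j:ℕ))).eval (Real.cos x)) with hP
  have hM : (Matrix.of fun i j : Fin (M+1) =>
      iteratedDeriv (i:ℕ) ((fun (j : Fin (M+1)) (y:ℝ) => Real.sin y * (v (j:ℕ)).eval (Real.cos y)) j) x)
      = Am * P := by
    ext i j
    rw [Matrix.mul_apply]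
    simp only [Matrix.of_apply, hAm, hP]
    rw [AA_spec]
    rw [Fin.sum_univ_eq_sum_range
      (fun l => AA (i:ℕ) l x * (derivative^[l] (v (j:ℕ))).eval (Real.cos x)) (M+1)]
    apply Finset.sum_subset
    · intro l hl
      simp only [Finset.mem_range] at hl ⊢
      omega
    · intro l hl hnl
      simp only [Finset.mem_range] at hl hnl
      rw [AA_zero (by omega : (i:ℕ) < l)]
      simp
  unfold _root_.wronskian
  rw [hM, Matrix.det_mul]
  have hA : Am.det = ∏ i ∈ range (M+1), ((-1:ℝ)^i * Real.sin x ^ (i+1)) := by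
    rw [Matrix.det_of_lowerTriangular Am (fun i j hij => by
      simp only [hAm, Matrix.of_apply]
      rw [AA_zero (show (i:ℕ) < (j:ℕ) from hij)])]
    have : ∀ i : Fin (M+1), Am i i = (-1:ℝ)^(i:ℕ) * Real.sin x ^ ((i:ℕ)+1) := by
      intro i
      simp only [hAm, Matrix.of_apply, AA_diag]
    rw [Finset.prod_congr rfl (fun i _ => this i)]
    exact Fin.prod_univ_eq_prod_range (fun i => (-1:ℝ)^i * Real.sin x ^ (i+1)) (M+1)
  have hPdet : P.det = (∏ j ∈ range M, ((Nat.factorial j : ℝ) * (v j).coeff j))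
      * (derivative^[M] (v M)).eval (Real.cos x) := by
    have htri : P.BlockTriangular id := by
      intro i j hij
      have h1 : (j:ℕ) < (i:ℕ) := hij
      have h2 : (i:ℕ) < M + 1 := i.isLt
      simp only [hP, Matrix.of_apply]
      rw [Polynomial.iterate_derivative_eq_zero
        (lt_of_le_of_lt (hv (j:ℕ) (by omega)) h1)]
      simp
    rw [Matrix.det_of_upperTriangular htri]
    have : ∀ i : Fin (M+1), P i i = (derivative^[(i:ℕ)] (v (i:ℕ))).eval (Real.cos x) := by
      intro i; simp only [hP, Matrix.of_apply]
    rw [Finset.prod_congr rfl (fun i _ => this i),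
      Fin.prod_univ_eq_prod_range (fun i => (derivative^[i] (v i)).eval (Real.cos x)) (M+1),
      Finset.prod_range_succ]
    congr 1
    apply Finset.prod_congr rfl
    intro j hj
    exact evalDiag (hv j (Finset.mem_range.mp hj)) _
  rw [hA, hPdet]

open Polynomial.Chebyshev in
lemma U_deg_coeff : ∀ j : ℕ,
    ((U ℝ (j:ℤ)).natDegree ≤ j ∧ (U ℝ (j:ℤ)).coeff j = 2^j)
    ∧ ((U ℝ ((j+1:ℕ):ℤ)).natDegree ≤ j+1 ∧ (U ℝ ((j+1:ℕ):ℤ)).coeff (j+1) = 2^(j+1)) := by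
  intro j
  induction j with
  | zero =>
    refine ⟨⟨?_, ?_⟩, ?_, ?_⟩
    · simp [U_zero]
    · simp [U_zero]
    · rw [show ((0+1:ℕ):ℤ) = 1 by norm_num, U_one]
      calc ((2:ℝ[X]) * X).natDegree ≤ (2:ℝ[X]).natDegree + X.natDegree := natDegree_mul_le
        _ ≤ 1 := by simp [natDegree_ofNat]
    · rw [show ((0+1:ℕ):ℤ) = 1 by norm_num, U_one]
      simp
  | succ j ih =>
    have hd0 : (U ℝ (j:ℤ)).natDegree ≤ j := ih.1.1
    obtain ⟨_, hd1, hc1⟩ := ih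
    refine ⟨⟨hd1, hc1⟩, ?_, ?_⟩ <;>
    · have h := U_add_two ℝ (j:ℤ)
      have e2 : ((j+1+1:ℕ):ℤ) = (j:ℤ) + 2 := by push_cast; ring
      have e1 : ((j+1:ℕ):ℤ) = (j:ℤ) + 1 := by push_cast; ring
      rw [e2, h, ← e1]
      first
      | calc (2 * X * U ℝ ((j+1:ℕ):ℤ) - U ℝ (j:ℤ)).natDegree
            ≤ max (2 * X * U ℝ ((j+1:ℕ):ℤ)).natDegree (U ℝ (j:ℤ)).natDegree :=
              natDegree_sub_le _ _
          _ ≤ j + 1 + 1 := by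
              apply max_le
              · calc (2 * X * U ℝ ((j+1:ℕ):ℤ)).natDegree
                    ≤ (2 * X : ℝ[X]).natDegree + (U ℝ ((j+1:ℕ):ℤ)).natDegree :=
                      natDegree_mul_le
                  _ ≤ 1 + (j+1) := by
                      gcongr
                      calc ((2:ℝ[X]) * X).natDegree ≤ (2:ℝ[X]).natDegree + X.natDegree :=
                        natDegree_mul_le
                        _ ≤ 1 := by simp [natDegree_ofNat]
                  _ = j + 1 + 1 := by ring
              · omega
      | · rw [coeff_sub, mul_assoc, coeff_ofNat_mul,
            coeff_X_mul, hc1,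
            Polynomial.coeff_eq_zero_of_natDegree_lt (by omega : (U ℝ (j:ℤ)).natDegree < j+1+1)]
          ring

open Polynomial.Chebyshev in
lemma CF (N k : ℕ) (x : ℝ) :
    W (N+1) k x
    = (∏ i ∈ range (N+1), ((-1:ℝ)^i * Real.sin x ^ (i+1)))
      * ((∏ j ∈ range N, ((Nat.factorial j : ℝ) * 2^j))
         * (derivative^[N] (U ℝ ((N+k:ℕ):ℤ))).eval (Real.cos x)) := by
  classical
  set v : ℕ → ℝ[X] := fun j => if j = N then U ℝ ((N+k:ℕ):ℤ) else U ℝ (j:ℤ) with hv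
  have hfun : (fun (j : Fin (N+1)) (y:ℝ) =>
      if (j:ℕ) = (N+1) - 1 then Real.sin (((N+1+k:ℕ):ℝ) * y)
      else Real.sin ((((j:ℕ)+1:ℕ):ℝ) * y))
      = fun (j : Fin (N+1)) (y:ℝ) => Real.sin y * (v (j:ℕ)).eval (Real.cos y) := by
    funext j y
    by_cases hj : (j:ℕ) = N
    · rw [if_pos (by omega), hv]
      simp only [hj, if_pos rfl, ite_true]
      rw [mul_comm (Real.sin y), U_real_cos]
      congr 1
      push_cast; ring
    · rw [if_neg (by omega), hv]
      simp only [if_neg hj]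
      rw [mul_comm (Real.sin y), U_real_cos]
      congr 1
      push_cast; ring
  have hW : W (N+1) k x
      = wronskian (N+1) (fun (j : Fin (N+1)) (y:ℝ) => Real.sin y * (v (j:ℕ)).eval (Real.cos y)) x := by
    unfold W
    rw [hfun]
  rw [hW, master N v (fun j hj => by
    rw [hv]; simp only [if_neg (by omega : ¬ j = N)]
    exact (U_deg_coeff j).1.1) x]
  congr 1
  congr 1
  · apply Finset.prod_congr rfl
    intro j hj
    have hj' : j < N := Finset.mem_range.mp hj
    rw [hv]
    simp only [if_neg (by omega : ¬ j = N)]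
    rw [(U_deg_coeff j).1.2]
  · rw [hv]
    simp only [if_pos rfl, ite_true]

lemma iter_deriv_add (k : ℕ) (p q : ℝ[X]) :
    derivative^[k] (p + q) = derivative^[k] p + derivative^[k] q := by
  induction k generalizing p q with
  | zero => simp
  | succ k ih => rw [Function.iterate_succ_apply, Function.iterate_succ_apply,
      Function.iterate_succ_apply, derivative_add, ih]

open Polynomial.Chebyshev in
lemma PI (m : ℤ) : U ℝ (m+2) - U ℝ m = 2 * T ℝ (m+2) := by
  have h1 := U_add_two ℝ m
  have h2 := T_eq_U_sub_X_mul_U ℝ (m+2)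
  rw [show m+2-1 = m+1 by ring] at h2
  linear_combination -2 * h2 - h1

open Polynomial.Chebyshev in
lemma PI' (m : ℤ) :
    derivative (U ℝ (m+2)) = derivative (U ℝ m) + C (2*((m:ℝ)+2)) * U ℝ (m+1) := by
  have h := congrArg derivative (PI m)
  rw [derivative_sub] at h
  have hT := T_derivative_eq_U (R := ℝ) (m+2)
  rw [show m+2-1 = m+1 by ring] at hT
  have h2 : derivative ((2:ℝ[X]) * T ℝ (m+2)) = 2 * derivative (T ℝ (m+2)) := by
    rw [(map_ofNat Polynomial.C 2).symm, derivative_C_mul]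
  rw [h2, hT] at h
  have hC : (C (2*((m:ℝ)+2)) : ℝ[X]) = 2 * ((m+2 : ℤ) : ℝ[X]) := by
    have : (2*((m:ℝ)+2)) = (((2*(m+2) : ℤ)):ℝ) := by push_cast; ring
    rw [this, Polynomial.C_eq_intCast]
    push_cast
    ring
  rw [hC]
  linear_combination h

open Polynomial.Chebyshev in
lemma PI_iter (q : ℕ) (m : ℤ) :
    derivative^[q+1] (U ℝ (m+2)) = derivative^[q+1] (U ℝ m)
      + C (2*((m:ℝ)+2)) * derivative^[q] (U ℝ (m+1)) := by
  rw [Function.iterate_succ_apply, Function.iterate_succ_apply, PI' m, iter_deriv_add,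
    Polynomial.iterate_derivative_C_mul]

theorem stmt5 (n k : ℕ) (hn : 2 ≤ n) (x : ℝ) :
    W n (k + 2) x =
      W n k x +
        (-2 : ℝ) ^ (n - 1) * ((n : ℝ) + k + 1) * ((n - 2).factorial : ℝ) *
          Real.sin x ^ n * W (n - 1) (k + 2) x := by
  obtain ⟨p, rfl⟩ : ∃ p, n = p + 2 := ⟨n - 2, by omega⟩
  have hW1 := CF (p+1) (k+2) x
  have hW2 := CF (p+1) k x
  have hW3 := CF p (k+2) x
  have g1 : W (p+2) (k+2) x = W (p+1+1) (k+2) x := rfl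
  have g2 : W (p+2) k x = W (p+1+1) k x := rfl
  have g3 : W (p+2-1) (k+2) x = W (p+1) (k+2) x := rfl
  have g4 : (((p+2-2).factorial : ℕ) : ℝ) = ((p.factorial : ℕ) : ℝ) := rfl
  have g5 : ((-2:ℝ))^(p+2-1) = (-2:ℝ)^(p+1) := rfl
  rw [g1, g2, g3, g4, g5, hW1, hW2, hW3]
  have e1 : (((p+1)+(k+2):ℕ):ℤ) = (((p+1)+k:ℕ):ℤ) + 2 := by push_cast; ring
  have e2 : ((p+(k+2):ℕ):ℤ) = (((p+1)+k:ℕ):ℤ) + 1 := by push_cast; ring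
  rw [e1, e2, PI_iter p (((p+1)+k:ℕ):ℤ), Polynomial.eval_add, Polynomial.eval_mul,
    Polynomial.eval_C]
  rw [Finset.prod_range_succ (fun i => (-1:ℝ)^i * Real.sin x ^ (i+1)) (p+1),
      Finset.prod_range_succ (fun j => (Nat.factorial j : ℝ) * 2^j) p]
  rw [show ((-2:ℝ))^(p+1) = (-1:ℝ)^(p+1) * (2:ℝ)^(p+1) by rw [← neg_one_mul, mul_pow]]
  push_cast
  ring
end

section
/- Let μ ≥ 0 be real, set ν := (1 + √(1 + 8μ/π²))/2, and for integer k ≥ 0 define f_k^{(μ)}(x) := 2^{ν−1} Γ(ν) (sin(πx))^ν C_k^{(ν)}(cos(πx)) for x ∈ (0,1). Then for all k ≥ 0 and all x ∈ (0,1), (1/2) (f_k^{(μ)})''(x) − μ (sin(πx))^{−2} f_k^{(μ)}(x) = −(1/2) π² (ν+k)² f_k^{(μ)}(x). -/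
open Real Finset

/-- `ν = (1 + √(1 + 8μ/π²))/2`. -/
noncomputable def nuOf (μ : ℝ) : ℝ := (1 + Real.sqrt (1 + 8 * μ / Real.pi ^ 2)) / 2

/-- Eigenfunction `f_k^{(μ)}(x) = 2^{ν−1} Γ(ν) (sin πx)^ν C_k^{(ν)}(cos πx)`. -/
noncomputable def fEig (μ : ℝ) (k : ℕ) (x : ℝ) : ℝ :=
  (2 : ℝ) ^ (nuOf μ - 1) * Real.Gamma (nuOf μ) *
    Real.sin (Real.pi * x) ^ (nuOf μ) * gegenbauerC (nuOf μ) k (Real.cos (Real.pi * x))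

/-- coefficient of `t^(k-2m)` in the Gegenbauer polynomial. -/
noncomputable def bco (ν : ℝ) (k m : ℕ) : ℝ :=
  (-1 : ℝ) ^ m * 2 ^ (k - 2 * m) * Real.Gamma (ν + k - m) /
    (Real.Gamma ν * (m.factorial : ℝ) * ((k - 2 * m).factorial : ℝ))

noncomputable def Gg (ν : ℝ) (k : ℕ) (t : ℝ) : ℝ :=
  ∑ m ∈ Finset.range (k / 2 + 1), bco ν k m * t ^ (k - 2 * m)

noncomputable def Gd (ν : ℝ) (k : ℕ) (t : ℝ) : ℝ :=
  ∑ m ∈ Finset.range (k / 2 + 1),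
    bco ν k m * ((k - 2 * m : ℕ) : ℝ) * t ^ (k - 2 * m - 1)

noncomputable def Gdd (ν : ℝ) (k : ℕ) (t : ℝ) : ℝ :=
  ∑ m ∈ Finset.range (k / 2 + 1),
    bco ν k m * ((k - 2 * m : ℕ) : ℝ) * ((k - 2 * m - 1 : ℕ) : ℝ) * t ^ (k - 2 * m - 2)

lemma claim1 (ν t : ℝ) (k m : ℕ) (h2m : 2 * m ≤ k) :
    (1 - t ^ 2) * (bco ν k m * ((k - 2 * m : ℕ) : ℝ) * ((k - 2 * m - 1 : ℕ) : ℝ) * t ^ (k - 2 * m - 2))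
      - (2 * ν + 1) * t * (bco ν k m * ((k - 2 * m : ℕ) : ℝ) * t ^ (k - 2 * m - 1))
      + (k : ℝ) * ((k : ℝ) + 2 * ν) * (bco ν k m * t ^ (k - 2 * m)) =
    bco ν k m * ((k - 2 * m : ℕ) : ℝ) * ((k - 2 * m - 1 : ℕ) : ℝ) * t ^ (k - 2 * m - 2)
      + 4 * m * (ν + (k : ℝ) - m) * (bco ν k m * t ^ (k - 2 * m)) := by
  set b := bco ν k m
  obtain ⟨n, hn⟩ : ∃ n, k = n + 2 * m := ⟨k - 2 * m, by omega⟩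
  subst hn
  rcases n with _ | _ | n
  · simp only [Nat.zero_add, Nat.add_sub_cancel, Nat.sub_self]
    push_cast
    ring
  · norm_num
    push_cast
    ring
  · have e1 : n + 1 + 1 + 2 * m - 2 * m = n + 2 := by omega
    rw [e1, show n + 2 - 1 = n + 1 from rfl, show n + 2 - 2 = n from rfl]
    push_cast
    ring

lemma claimL (ν : ℝ) (hν : 0 < ν) (k m : ℕ) (hm : 2 * (m + 1) ≤ k) :
    bco ν k m * ((k - 2 * m : ℕ) : ℝ) * ((k - 2 * m - 1 : ℕ) : ℝ)
      = -(4 * (m + 1 : ℝ) * (ν + (k : ℝ) - (m + 1 : ℕ)) * bco ν k (m + 1)) := by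
  obtain ⟨n, hn⟩ : ∃ n, k = n + 2 + 2 * m := ⟨k - 2 * (m + 1), by omega⟩
  subst hn
  have e1 : n + 2 + 2 * m - 2 * m = n + 2 := by omega
  have e2 : n + 2 + 2 * m - 2 * (m + 1) = n := by omega
  set K := n + 2 + 2 * m with hK
  have hx0 : (0 : ℝ) < ν + (K : ℕ) - ((m + 1 : ℕ) : ℝ) := by
    have : (m : ℝ) + 1 ≤ K := by
      have : m + 1 ≤ K := by omega
      exact_mod_cast this
    push_cast
    push_cast at this
    linarith
  have hg : Real.Gamma (ν + (K : ℕ) - (m : ℕ))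
      = (ν + (K : ℕ) - ((m + 1 : ℕ) : ℝ))
        * Real.Gamma (ν + (K : ℕ) - ((m + 1 : ℕ) : ℝ)) := by
    have h := Real.Gamma_add_one (s := ν + (K : ℕ) - ((m + 1 : ℕ) : ℝ)) hx0.ne'
    rw [show ν + ((K : ℕ) : ℝ) - ((m : ℕ) : ℝ)
        = ν + (K : ℕ) - ((m + 1 : ℕ) : ℝ) + 1 by push_cast; ring]
    exact h
  unfold bco
  rw [e1, e2, hg]
  have hΓ : Real.Gamma ν ≠ 0 := (Real.Gamma_pos_of_pos hν).ne'
  have hf1 : ((m + 1).factorial : ℝ) = (m + 1) * m.factorial := by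
    rw [Nat.factorial_succ]; push_cast; ring
  have hf2 : ((n + 2).factorial : ℝ) = (n + 2) * ((n + 1) * n.factorial) := by
    rw [show n + 2 = (n + 1) + 1 from rfl, Nat.factorial_succ, Nat.factorial_succ]
    push_cast; ring
  rw [hf1, hf2]
  have hfm : (m.factorial : ℝ) ≠ 0 := Nat.cast_ne_zero.2 m.factorial_ne_zero
  have hfn : (n.factorial : ℝ) ≠ 0 := Nat.cast_ne_zero.2 n.factorial_ne_zero
  have hpow : (2 : ℝ) ^ (n + 2) = 4 * 2 ^ n := by rw [pow_add]; ring
  rw [hpow]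
  field_simp
  push_cast
  ring

lemma gegen_ode (ν : ℝ) (hν : 0 < ν) (k : ℕ) (t : ℝ) :
    (1 - t ^ 2) * Gdd ν k t - (2 * ν + 1) * t * Gd ν k t
      + (k : ℝ) * ((k : ℝ) + 2 * ν) * Gg ν k t = 0 := by
  have hdiv : 2 * (k / 2) ≤ k := by omega
  have key : (1 - t ^ 2) * Gdd ν k t - (2 * ν + 1) * t * Gd ν k t
      + (k : ℝ) * ((k : ℝ) + 2 * ν) * Gg ν k t
      = (∑ m ∈ Finset.range (k / 2 + 1),
          bco ν k m * ((k - 2 * m : ℕ) : ℝ) * ((k - 2 * m - 1 : ℕ) : ℝ) * t ^ (k - 2 * m - 2))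
        + ∑ m ∈ Finset.range (k / 2 + 1),
          4 * m * (ν + (k : ℝ) - m) * (bco ν k m * t ^ (k - 2 * m)) := by
    unfold Gg Gd Gdd
    rw [Finset.mul_sum, Finset.mul_sum, Finset.mul_sum, ← Finset.sum_sub_distrib,
      ← Finset.sum_add_distrib, ← Finset.sum_add_distrib]
    refine Finset.sum_congr rfl fun m hm => ?_
    have h2m : 2 * m ≤ k := by
      have := Finset.mem_range.1 hm; omega
    exact claim1 ν t k m h2m
  rw [key]
  have h1 : ∑ m ∈ Finset.range (k / 2 + 1),
      bco ν k m * ((k - 2 * m : ℕ) : ℝ) * ((k - 2 * m - 1 : ℕ) : ℝ) * t ^ (k - 2 * m - 2)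
      = ∑ m ∈ Finset.range (k / 2),
          -(4 * ((m + 1 : ℕ) : ℝ) * (ν + (k : ℝ) - ((m + 1 : ℕ) : ℝ))
            * (bco ν k (m + 1) * t ^ (k - 2 * (m + 1)))) := by
    rw [Finset.sum_range_succ]
    have hlast : (((k - 2 * (k / 2) : ℕ) : ℝ)) * (((k - 2 * (k / 2) - 1 : ℕ) : ℝ)) = 0 := by
      have : k - 2 * (k / 2) - 1 = 0 ∨ k - 2 * (k / 2) = 0 := by omega
      rcases this with h | h <;> rw [h] <;> simp
    rw [show bco ν k (k / 2) * ((k - 2 * (k / 2) : ℕ) : ℝ) * ((k - 2 * (k / 2) - 1 : ℕ) : ℝ)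
          * t ^ (k - 2 * (k / 2) - 2) = 0 by
        rw [mul_assoc (bco ν k (k / 2)), hlast]; ring, add_zero]
    refine Finset.sum_congr rfl fun m hm => ?_
    have hm' : 2 * (m + 1) ≤ k := by
      have := Finset.mem_range.1 hm; omega
    have hL := claimL ν hν k m hm'
    have hexp : k - 2 * m - 2 = k - 2 * (m + 1) := by omega
    rw [hexp]
    push_cast at hL ⊢
    linear_combination (t ^ (k - 2 * (m + 1))) * hL
  rw [h1]
  rw [show (∑ m ∈ Finset.range (k / 2),
      -(4 * ((m + 1 : ℕ) : ℝ) * (ν + (k : ℝ) - ((m + 1 : ℕ) : ℝ))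
        * (bco ν k (m + 1) * t ^ (k - 2 * (m + 1)))))
      = -∑ m ∈ Finset.range (k / 2),
          (4 * ((m + 1 : ℕ) : ℝ) * (ν + (k : ℝ) - ((m + 1 : ℕ) : ℝ))
            * (bco ν k (m + 1) * t ^ (k - 2 * (m + 1)))) from Finset.sum_neg_distrib _]
  rw [Finset.sum_range_succ' (fun m => 4 * (m : ℝ) * (ν + (k : ℝ) - m) * (bco ν k m * t ^ (k - 2 * m))) (k / 2)]
  push_cast
  ring

lemma gegen_eq_Gg (ν : ℝ) (k : ℕ) (t : ℝ) : gegenbauerC ν k t = Gg ν k t := by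
  unfold gegenbauerC Gg bco
  refine Finset.sum_congr rfl fun m _ => ?_
  rw [mul_pow]
  ring

lemma hasDerivAt_Gg (ν : ℝ) (k : ℕ) (t : ℝ) : HasDerivAt (Gg ν k) (Gd ν k t) t := by
  have h : HasDerivAt (fun t => ∑ m ∈ Finset.range (k / 2 + 1), bco ν k m * t ^ (k - 2 * m))
      (∑ m ∈ Finset.range (k / 2 + 1),
        bco ν k m * (((k - 2 * m : ℕ) : ℝ) * t ^ (k - 2 * m - 1))) t := by
    apply HasDerivAt.fun_sum
    intro m _
    exact (hasDerivAt_pow (k - 2 * m) t).const_mul (bco ν k m)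
  have : Gd ν k t = ∑ m ∈ Finset.range (k / 2 + 1),
      bco ν k m * (((k - 2 * m : ℕ) : ℝ) * t ^ (k - 2 * m - 1)) := by
    unfold Gd; exact Finset.sum_congr rfl fun m _ => by ring
  rw [show Gg ν k = fun t => ∑ m ∈ Finset.range (k / 2 + 1), bco ν k m * t ^ (k - 2 * m) from rfl,
    this]
  exact h

lemma hasDerivAt_Gd (ν : ℝ) (k : ℕ) (t : ℝ) : HasDerivAt (Gd ν k) (Gdd ν k t) t := by
  have h : HasDerivAt (fun t => ∑ m ∈ Finset.range (k / 2 + 1),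
      bco ν k m * ((k - 2 * m : ℕ) : ℝ) * t ^ (k - 2 * m - 1))
      (∑ m ∈ Finset.range (k / 2 + 1),
        bco ν k m * ((k - 2 * m : ℕ) : ℝ)
          * (((k - 2 * m - 1 : ℕ) : ℝ) * t ^ (k - 2 * m - 1 - 1))) t := by
    apply HasDerivAt.fun_sum
    intro m _
    exact (hasDerivAt_pow (k - 2 * m - 1) t).const_mul (bco ν k m * ((k - 2 * m : ℕ) : ℝ))
  have : Gdd ν k t = ∑ m ∈ Finset.range (k / 2 + 1),
      bco ν k m * ((k - 2 * m : ℕ) : ℝ)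
        * (((k - 2 * m - 1 : ℕ) : ℝ) * t ^ (k - 2 * m - 1 - 1)) := by
    unfold Gdd
    refine Finset.sum_congr rfl fun m _ => ?_
    rw [show k - 2 * m - 1 - 1 = k - 2 * m - 2 by omega]
    ring
  rw [show Gd ν k = fun t => ∑ m ∈ Finset.range (k / 2 + 1),
      bco ν k m * ((k - 2 * m : ℕ) : ℝ) * t ^ (k - 2 * m - 1) from rfl, this]
  exact h

noncomputable def F1 (ν : ℝ) (k : ℕ) (y : ℝ) : ℝ :=
  (2 : ℝ) ^ (ν - 1) * Real.Gamma ν * π *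
    (ν * Real.cos (π * y) * Real.sin (π * y) ^ (ν - 1) * Gg ν k (Real.cos (π * y))
      - Real.sin (π * y) ^ (ν + 1) * Gd ν k (Real.cos (π * y)))

noncomputable def F2 (ν : ℝ) (k : ℕ) (y : ℝ) : ℝ :=
  (2 : ℝ) ^ (ν - 1) * Real.Gamma ν * π ^ 2 *
    (-ν * Real.sin (π * y) ^ ν * Gg ν k (Real.cos (π * y))
      + ν * (ν - 1) * Real.cos (π * y) ^ 2 * Real.sin (π * y) ^ (ν - 2)
          * Gg ν k (Real.cos (π * y))
      - (2 * ν + 1) * Real.cos (π * y) * Real.sin (π * y) ^ ν * Gd ν k (Real.cos (π * y))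
      + Real.sin (π * y) ^ (ν + 2) * Gdd ν k (Real.cos (π * y)))

lemma hasDerivAt_sinpi (y : ℝ) :
    HasDerivAt (fun y => Real.sin (π * y)) (π * Real.cos (π * y)) y := by
  have h := (Real.hasDerivAt_sin (π * y)).comp y ((hasDerivAt_id y).const_mul π)
  rw [show π * Real.cos (π * y) = Real.cos (π * y) * (π * 1) by ring]
  exact h

lemma hasDerivAt_cospi (y : ℝ) :
    HasDerivAt (fun y => Real.cos (π * y)) (-(π * Real.sin (π * y))) y := by
  have h := (Real.hasDerivAt_cos (π * y)).comp y ((hasDerivAt_id y).const_mul π)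
  rw [show -(π * Real.sin (π * y)) = -Real.sin (π * y) * (π * 1) by ring]
  exact h

lemma hasDerivAt_F0 (ν : ℝ) (k : ℕ) (y : ℝ) (hs : 0 < Real.sin (π * y)) :
    HasDerivAt (fun y => (2 : ℝ) ^ (ν - 1) * Real.Gamma ν *
        (Real.sin (π * y) ^ ν * Gg ν k (Real.cos (π * y)))) (F1 ν k y) y := by
  have hpow : ∀ p : ℝ, HasDerivAt (fun y => Real.sin (π * y) ^ p)
      ((π * Real.cos (π * y)) * p * Real.sin (π * y) ^ (p - 1)) y :=
    fun p => (hasDerivAt_sinpi y).rpow_const (Or.inl hs.ne')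
  have hG' : HasDerivAt (fun y => Gg ν k (Real.cos (π * y)))
      (Gd ν k (Real.cos (π * y)) * (-(π * Real.sin (π * y)))) y := by
    have := (hasDerivAt_Gg ν k (Real.cos (π * y))).comp y (hasDerivAt_cospi y); exact this
  have h := ((hpow ν).mul hG').const_mul ((2 : ℝ) ^ (ν - 1) * Real.Gamma ν)
  have i1 : Real.sin (π * y) ^ ν = Real.sin (π * y) ^ (ν - 1) * Real.sin (π * y) := by
    have := Real.rpow_add_one hs.ne' (ν - 1)
    rw [sub_add_cancel] at this
    exact this
  have i4 : Real.sin (π * y) ^ (ν + 1) = Real.sin (π * y) ^ ν * Real.sin (π * y) :=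
    Real.rpow_add_one hs.ne' ν
  refine h.congr_deriv ?_
  unfold F1
  rw [i4, i1]
  ring

lemma hasDerivAt_F1 (ν : ℝ) (k : ℕ) (y : ℝ) (hs : 0 < Real.sin (π * y)) :
    HasDerivAt (F1 ν k) (F2 ν k y) y := by
  have hpow : ∀ p : ℝ, HasDerivAt (fun y => Real.sin (π * y) ^ p)
      ((π * Real.cos (π * y)) * p * Real.sin (π * y) ^ (p - 1)) y :=
    fun p => (hasDerivAt_sinpi y).rpow_const (Or.inl hs.ne')
  have hG' : HasDerivAt (fun y => Gg ν k (Real.cos (π * y)))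
      (Gd ν k (Real.cos (π * y)) * (-(π * Real.sin (π * y)))) y := by
    have := (hasDerivAt_Gg ν k (Real.cos (π * y))).comp y (hasDerivAt_cospi y); exact this
  have hGd' : HasDerivAt (fun y => Gd ν k (Real.cos (π * y)))
      (Gdd ν k (Real.cos (π * y)) * (-(π * Real.sin (π * y)))) y := by
    have := (hasDerivAt_Gd ν k (Real.cos (π * y))).comp y (hasDerivAt_cospi y); exact this
  have hT1 := (((hasDerivAt_cospi y).const_mul ν).mul (hpow (ν - 1))).mul hG'
  have hT2 := (hpow (ν + 1)).mul hGd'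
  have h := (hT1.sub hT2).const_mul ((2 : ℝ) ^ (ν - 1) * Real.Gamma ν * π)
  have j1 : Real.sin (π * y) ^ (ν - 1) = Real.sin (π * y) ^ (ν - 2) * Real.sin (π * y) := by
    have := Real.rpow_add_one hs.ne' (ν - 2)
    rw [show ν - 2 + 1 = ν - 1 by ring] at this
    exact this
  have j2 : Real.sin (π * y) ^ ν = Real.sin (π * y) ^ (ν - 1) * Real.sin (π * y) := by
    have := Real.rpow_add_one hs.ne' (ν - 1)
    rw [sub_add_cancel] at this
    exact this
  have j3 : Real.sin (π * y) ^ (ν + 1) = Real.sin (π * y) ^ ν * Real.sin (π * y) :=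
    Real.rpow_add_one hs.ne' ν
  have j4 : Real.sin (π * y) ^ (ν + 2) = Real.sin (π * y) ^ (ν + 1) * Real.sin (π * y) := by
    have := Real.rpow_add_one hs.ne' (ν + 1)
    rw [show ν + 1 + 1 = ν + 2 by ring] at this
    exact this
  have i2 : Real.sin (π * y) ^ (ν - 1 - 1) = Real.sin (π * y) ^ (ν - 2) := by
    rw [show ν - 1 - 1 = ν - 2 by ring]
  have i3 : Real.sin (π * y) ^ (ν + 1 - 1) = Real.sin (π * y) ^ ν := by
    rw [show ν + 1 - 1 = ν by ring]
  refine h.congr_deriv ?_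
  unfold F2
  simp only [Pi.mul_apply]
  rw [i2, i3, j4, j3, j2, j1]
  ring

theorem stmt8 (μ : ℝ) (hμ : 0 ≤ μ) (k : ℕ) (x : ℝ) (hx : x ∈ Set.Ioo (0 : ℝ) 1) :
    (1 / 2) * deriv (deriv (fEig μ k)) x -
        μ * Real.sin (Real.pi * x) ^ (-2 : ℝ) * fEig μ k x =
      -(1 / 2) * Real.pi ^ 2 * (nuOf μ + k) ^ 2 * fEig μ k x := by
  obtain ⟨hx0, hx1⟩ := hx
  set ν := nuOf μ with hνdef
  have hpi := Real.pi_pos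
  have hD : (0 : ℝ) ≤ 1 + 8 * μ / π ^ 2 := by positivity
  have hsq : Real.sqrt (1 + 8 * μ / π ^ 2) ^ 2 = 1 + 8 * μ / π ^ 2 := Real.sq_sqrt hD
  have hsqrt1 : (1 : ℝ) ≤ Real.sqrt (1 + 8 * μ / π ^ 2) := by
    have h0 : (0 : ℝ) ≤ 8 * μ / π ^ 2 := by positivity
    have h := Real.sqrt_le_sqrt (show (1:ℝ) ≤ 1 + 8 * μ / π ^ 2 by linarith)
    simpa using h
  have hν1 : (1 : ℝ) ≤ ν := by
    rw [hνdef, nuOf]; linarith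
  have hν0 : (0 : ℝ) < ν := by linarith
  have hμeq : μ = π ^ 2 * ν * (ν - 1) / 2 := by
    have h2 : 2 * ν - 1 = Real.sqrt (1 + 8 * μ / π ^ 2) := by
      rw [hνdef, nuOf]; ring
    have h3 : (2 * ν - 1) ^ 2 = 1 + 8 * μ / π ^ 2 := by rw [h2]; exact hsq
    have hπ2 : (π : ℝ) ^ 2 ≠ 0 := by positivity
    field_simp at h3
    linarith [h3]
  -- positivity of sin on the interval
  have hsin : ∀ y : ℝ, y ∈ Set.Ioo (0 : ℝ) 1 → 0 < Real.sin (π * y) := by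
    intro y hy
    apply Real.sin_pos_of_pos_of_lt_pi
    · exact mul_pos hpi hy.1
    · calc π * y < π * 1 := by nlinarith [hy.2]
        _ = π := mul_one π
  have hsx : 0 < Real.sin (π * x) := hsin x ⟨hx0, hx1⟩
  -- fEig rewritten
  have hfe : ∀ y : ℝ, fEig μ k y = (2 : ℝ) ^ (ν - 1) * Real.Gamma ν *
      (Real.sin (π * y) ^ ν * Gg ν k (Real.cos (π * y))) := by
    intro y
    unfold fEig
    rw [gegen_eq_Gg]
    ring
  have hfeq : fEig μ k = fun y => (2 : ℝ) ^ (ν - 1) * Real.Gamma ν *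
      (Real.sin (π * y) ^ ν * Gg ν k (Real.cos (π * y))) := funext hfe
  -- first derivative near x
  have hev : deriv (fEig μ k) =ᶠ[nhds x] F1 ν k := by
    filter_upwards [isOpen_Ioo.mem_nhds (Set.mem_Ioo.2 ⟨hx0, hx1⟩)] with y hy
    have : HasDerivAt (fEig μ k) (F1 ν k y) y := by
      rw [hfeq]; exact hasDerivAt_F0 ν k y (hsin y hy)
    exact this.deriv
  have h2nd : deriv (deriv (fEig μ k)) x = F2 ν k x := by
    rw [hev.deriv_eq]
    exact (hasDerivAt_F1 ν k x hsx).deriv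
  -- abbreviations
  set s := Real.sin (π * x) with hsdef
  set c := Real.cos (π * x) with hcdef
  set C := (2 : ℝ) ^ (ν - 1) * Real.Gamma ν with hCdef
  set u := s ^ (ν - 2) with hudef
  have js2 : s ^ ν = u * (s * s) := by
    rw [hudef]
    rw [show s ^ ν = s ^ (ν - 2) * s * s by
      have h1 := Real.rpow_add_one hsx.ne' (ν - 2)
      have h2 := Real.rpow_add_one hsx.ne' (ν - 1)
      rw [show ν - 2 + 1 = ν - 1 by ring] at h1
      rw [sub_add_cancel] at h2
      rw [h2, h1]]
    ring
  have js4 : s ^ (ν + 2) = u * (s * s) * (s * s) := by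
    have h3 := Real.rpow_add_one hsx.ne' ν
    have h4 := Real.rpow_add_one hsx.ne' (ν + 1)
    rw [show ν + 1 + 1 = ν + 2 by ring] at h4
    rw [h4, h3, js2]
    ring
  have hneg : s ^ (-2 : ℝ) * fEig μ k x = C * (u * Gg ν k c) := by
    rw [hfe x, ← hsdef, ← hcdef]
    rw [show s ^ (-2 : ℝ) * (C * (s ^ ν * Gg ν k c)) = C * ((s ^ (-2 : ℝ) * s ^ ν) * Gg ν k c) by ring]
    rw [← Real.rpow_add hsx, show (-2 : ℝ) + ν = ν - 2 by ring, ← hudef]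
  have hode := gegen_ode ν hν0 k c
  have hpy : s ^ 2 + c ^ 2 = 1 := Real.sin_sq_add_cos_sq (π * x)
  rw [h2nd, mul_assoc μ, hneg, hfe x, ← hsdef, ← hcdef]
  unfold F2
  rw [← hsdef, ← hcdef, js2, js4, hμeq]
  linear_combination (C * π ^ 2 * u * (s * s) / 2) * hode
    + (C * π ^ 2 * u / 2) * (ν * (ν - 1) * Gg ν k c + (s * s) * Gdd ν k c) * hpy
end

section
/- Let l < r be extended reals, let c : (l,r) → ℝ be differentiable, let λ ∈ ℝ, and let φ : (l,r) → (0,∞) be three times differentiable with (1/2)φ''(x) − c(x)φ(x) = λφ(x) on (l,r). Define c̃(x) := c(x) − (d/dx)(φ'(x)/φ(x)). Then for every three times differentiable f : (l,r) → ℝ and every x ∈ (l,r), (1/2)(𝒟_φ f)''(x) − c̃(x)(𝒟_φ f)(x) = (𝒟_φ((1/2)f'' − c·f))(x). In particular, if (1/2)f'' − c f = κ f on (l,r) then g = 𝒟_φ f satisfies (1/2)g'' − c̃ g = κ g on (l,r). -/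
open Real

/-- The open interval `(l, r)` of reals, for extended-real endpoints. -/
def erIoo (l r : EReal) : Set ℝ := {x : ℝ | l < (x : EReal) ∧ (x : EReal) < r}

/-- Darboux operator: `(𝒟_φ f)(x) = f'(x) − (φ'(x)/φ(x)) f(x)`. -/
noncomputable def Dop (φ f : ℝ → ℝ) : ℝ → ℝ := fun x => deriv f x - (deriv φ x / φ x) * f x

/-- Auxiliary: the formula for `(φ'/φ)'`. -/
noncomputable def U1aux (φ : ℝ → ℝ) : ℝ → ℝ :=
  fun y => (deriv (deriv φ) y * φ y - deriv φ y * deriv φ y) / (φ y * φ y)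

/-- Auxiliary: the formula for `(𝒟_φ f)'`. -/
noncomputable def D1aux (φ f : ℝ → ℝ) : ℝ → ℝ :=
  fun y => deriv (deriv f) y - (U1aux φ y * f y + deriv φ y / φ y * deriv f y)

lemma derivu_eq (φ : ℝ → ℝ) (x : ℝ) (h0 : DifferentiableAt ℝ φ x)
    (h1 : DifferentiableAt ℝ (deriv φ) x) (hne : φ x ≠ 0) :
    deriv (fun y => deriv φ y / φ y) x = U1aux φ x := by
  rw [deriv_fun_div h1 h0 hne, U1aux, pow_two]

lemma U1diff (φ : ℝ → ℝ) (x : ℝ) (h0 : DifferentiableAt ℝ φ x)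
    (h1 : DifferentiableAt ℝ (deriv φ) x) (h2 : DifferentiableAt ℝ (deriv (deriv φ)) x)
    (hne : φ x ≠ 0) : DifferentiableAt ℝ (U1aux φ) x :=
  ((h2.mul h0).sub (h1.mul h1)).div (h0.mul h0) (mul_ne_zero hne hne)

lemma derivU1_eq (φ : ℝ → ℝ) (x : ℝ) (h0 : DifferentiableAt ℝ φ x)
    (h1 : DifferentiableAt ℝ (deriv φ) x) (h2 : DifferentiableAt ℝ (deriv (deriv φ)) x)
    (hne : φ x ≠ 0) :
    deriv (U1aux φ) x =
      ((deriv (deriv (deriv φ)) x * φ x + deriv (deriv φ) x * deriv φ x -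
          (deriv (deriv φ) x * deriv φ x + deriv φ x * deriv (deriv φ) x)) * (φ x * φ x) -
        (deriv (deriv φ) x * φ x - deriv φ x * deriv φ x) *
          (deriv φ x * φ x + φ x * deriv φ x)) / (φ x * φ x) ^ 2 := by
  unfold U1aux
  rw [deriv_fun_div ((h2.fun_mul h0).fun_sub (h1.fun_mul h1)) (h0.fun_mul h0) (mul_ne_zero hne hne),
    deriv_fun_sub (h2.fun_mul h0) (h1.fun_mul h1), deriv_fun_mul h2 h0, deriv_fun_mul h1 h1, deriv_fun_mul h0 h0]

theorem stmt14 (l r : EReal) (hlr : l < r) (c : ℝ → ℝ) (lam : ℝ) (φ f : ℝ → ℝ)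
    (hc : ∀ x ∈ erIoo l r, DifferentiableAt ℝ c x)
    (hφpos : ∀ x ∈ erIoo l r, 0 < φ x)
    (hφdiff : ∀ x ∈ erIoo l r,
      DifferentiableAt ℝ φ x ∧ DifferentiableAt ℝ (deriv φ) x ∧
        DifferentiableAt ℝ (deriv (deriv φ)) x)
    (hφeq : ∀ x ∈ erIoo l r,
      (1 / 2) * deriv (deriv φ) x - c x * φ x = lam * φ x)
    (hfdiff : ∀ x ∈ erIoo l r,
      DifferentiableAt ℝ f x ∧ DifferentiableAt ℝ (deriv f) x ∧
        DifferentiableAt ℝ (deriv (deriv f)) x) :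
    (∀ x ∈ erIoo l r,
        (1 / 2) * deriv (deriv (Dop φ f)) x -
            (c x - deriv (fun y => deriv φ y / φ y) x) * Dop φ f x =
          Dop φ (fun y => (1 / 2) * deriv (deriv f) y - c y * f y) x) ∧
      (∀ κ : ℝ,
        (∀ x ∈ erIoo l r, (1 / 2) * deriv (deriv f) x - c x * f x = κ * f x) →
          ∀ x ∈ erIoo l r,
            (1 / 2) * deriv (deriv (Dop φ f)) x -
                (c x - deriv (fun y => deriv φ y / φ y) x) * Dop φ f x =
              κ * Dop φ f x) := by
  have hS : IsOpen (erIoo l r) := by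
    have : erIoo l r = (fun x : ℝ => (x : EReal)) ⁻¹' (Set.Ioi l ∩ Set.Iio r) := rfl
    rw [this]
    exact (isOpen_Ioi.inter isOpen_Iio).preimage continuous_coe_real_ereal
  have key : ∀ x ∈ erIoo l r, ∀ g h : ℝ → ℝ, (∀ y ∈ erIoo l r, g y = h y) →
      deriv g x = deriv h x := fun x hx g h hgh =>
    Filter.EventuallyEq.deriv_eq (Filter.eventually_of_mem (hS.mem_nhds hx) hgh)
  have hφne : ∀ x ∈ erIoo l r, φ x ≠ 0 := fun x hx => (hφpos x hx).ne'
  -- deriv (Dop φ f) = D1aux φ f on the interval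
  have hD0deriv : ∀ y ∈ erIoo l r, deriv (Dop φ f) y = D1aux φ f y := by
    intro y hy
    obtain ⟨h0, h1, h2⟩ := hφdiff y hy
    obtain ⟨g0, g1, g2⟩ := hfdiff y hy
    have hu : DifferentiableAt ℝ (fun z => deriv φ z / φ z) y :=
      h1.div h0 (hφne y hy)
    have : deriv (Dop φ f) y = deriv (fun z => deriv f z - deriv φ z / φ z * f z) y := rfl
    rw [this, deriv_fun_sub g1 (hu.fun_mul g0), deriv_fun_mul hu g0, derivu_eq φ y h0 h1 (hφne y hy)]
    rfl
  have main : ∀ x ∈ erIoo l r,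
      (1 / 2) * deriv (deriv (Dop φ f)) x -
          (c x - deriv (fun y => deriv φ y / φ y) x) * Dop φ f x =
        Dop φ (fun y => (1 / 2) * deriv (deriv f) y - c y * f y) x := by
    intro x hx
    obtain ⟨h0, h1, h2⟩ := hφdiff x hx
    obtain ⟨g0, g1, g2⟩ := hfdiff x hx
    have hne := hφne x hx
    have hu : DifferentiableAt ℝ (fun z => deriv φ z / φ z) x := h1.div h0 hne
    have hU1 : DifferentiableAt ℝ (U1aux φ) x := U1diff φ x h0 h1 h2 hne
    -- second derivative of Dop φ f
    have hDeq : deriv (deriv (Dop φ f)) x = deriv (D1aux φ f) x :=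
      key x hx _ _ hD0deriv
    have hD1 : deriv (D1aux φ f) x =
        deriv (deriv (deriv f)) x -
          (deriv (U1aux φ) x * f x + U1aux φ x * deriv f x +
            (U1aux φ x * deriv f x + deriv φ x / φ x * deriv (deriv f) x)) := by
      unfold D1aux
      rw [deriv_fun_sub g2 ((hU1.fun_mul g0).fun_add (hu.fun_mul g1)),
        deriv_fun_add (hU1.fun_mul g0) (hu.fun_mul g1), deriv_fun_mul hU1 g0, deriv_fun_mul hu g1,
        derivu_eq φ x h0 h1 hne]
    -- derivative of the RHS inner function
    have hH : deriv (fun y => (1 / 2) * deriv (deriv f) y - c y * f y) x =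
        (1 / 2) * deriv (deriv (deriv f)) x - (deriv c x * f x + c x * deriv f x) := by
      rw [deriv_fun_sub ((differentiableAt_const _).fun_mul g2) ((hc x hx).fun_mul g0),
        deriv_const_mul _ g2, deriv_fun_mul (hc x hx) g0]
    -- differentiated eigen-equation for φ
    have e2 : (1 / 2) * deriv (deriv (deriv φ)) x - (deriv c x * φ x + c x * deriv φ x) =
        lam * deriv φ x := by
      have h := key x hx (fun y => (1 / 2) * deriv (deriv φ) y - c y * φ y)
        (fun y => lam * φ y) hφeq
      rw [deriv_fun_sub ((differentiableAt_const _).fun_mul h2) ((hc x hx).fun_mul h0),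
        deriv_const_mul _ h2, deriv_fun_mul (hc x hx) h0, deriv_const_mul _ h0] at h
      exact h
    have e1 := hφeq x hx
    rw [hDeq, hD1, derivU1_eq φ x h0 h1 h2 hne, derivu_eq φ x h0 h1 hne]
    show _ = deriv (fun y => (1 / 2) * deriv (deriv f) y - c y * f y) x -
      deriv φ x / φ x * ((1 / 2) * deriv (deriv f) x - c x * f x)
    rw [hH]
    unfold U1aux
    simp only [Dop]
    field_simp
    linear_combination (-2 * φ x ^ 2 * f x) * e2 + (2 * φ x * deriv φ x * f x) * e1
  refine ⟨main, ?_⟩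
  intro κ heig x hx
  rw [main x hx]
  obtain ⟨g0, g1, g2⟩ := hfdiff x hx
  have hHd : deriv (fun y => (1 / 2) * deriv (deriv f) y - c y * f y) x =
      deriv (fun y => κ * f y) x := key x hx _ _ heig
  show deriv (fun y => (1 / 2) * deriv (deriv f) y - c y * f y) x -
      deriv φ x / φ x * ((1 / 2) * deriv (deriv f) x - c x * f x) = _
  rw [hHd, deriv_const_mul _ g0, heig x hx]
  show _ = κ * (deriv f x - deriv φ x / φ x * f x)
  ring
end

section
/- Let l < r be extended reals, let c : (l,r) → ℝ be smooth, and let h_1, …, h_n, ψ : (l,r) → ℝ be smooth functions such that (1/2)h_i'' − c·h_i = λ_i h_i on (l,r) for constants λ_1, …, λ_n ∈ ℝ and (1/2)ψ'' − c·ψ = κψ on (l,r) for a constant κ ∈ ℝ. Suppose W(x) := Wr{h_1,…,h_n}(x) is nonzero for all x ∈ (l,r), and define ψ_n(x) := Wr{h_1,…,h_n,ψ}(x) / W(x) and c_n(x) := c(x) − (d/dx)(W'(x)/W(x)). Then (1/2)ψ_n''(x) − c_n(x)ψ_n(x) = κψ_n(x) for all x ∈ (l,r). -/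
open Real

open Filter Finset

local notation "∞" => ((⊤ : ℕ∞) : WithTop ℕ∞)

lemma erIoo_open (l r : EReal) : IsOpen (erIoo l r) := by
  have : erIoo l r = ((↑) : ℝ → EReal) ⁻¹' (Set.Ioo l r) := rfl
  rw [this]
  exact (isOpen_Ioo).preimage continuous_coe_real_ereal
lemma my_itsmooth {f : ℝ → ℝ} {s : Set ℝ} (hs : IsOpen s) (hf : ContDiffOn ℝ ∞ f s) (k : ℕ) :
    ContDiffOn ℝ ∞ (iteratedDeriv k f) s := by
  induction k with
  | zero => simpa [iteratedDeriv_zero] using hf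
  | succ k ih =>
    rw [iteratedDeriv_succ]
    exact ih.deriv_of_isOpen hs (by simp)

lemma my_hasDerivAt_iter {f : ℝ → ℝ} {s : Set ℝ} (hs : IsOpen s) (hf : ContDiffOn ℝ ∞ f s)
    (k : ℕ) {x : ℝ} (hx : x ∈ s) :
    HasDerivAt (iteratedDeriv k f) (iteratedDeriv (k+1) f x) x := by
  have h1 : DifferentiableAt ℝ (iteratedDeriv k f) x :=
    (((my_itsmooth hs hf k).differentiableOn (by simp)) x hx
      ).differentiableAt (hs.mem_nhds hx)
  simpa [iteratedDeriv_succ] using h1.hasDerivAt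

lemma my_itcongr {f g : ℝ → ℝ} {s : Set ℝ} (hs : IsOpen s) (hfg : ∀ y ∈ s, f y = g y) (k : ℕ) :
    ∀ x ∈ s, iteratedDeriv k f x = iteratedDeriv k g x := by
  induction k with
  | zero => simpa [iteratedDeriv_zero] using hfg
  | succ k ih =>
    intro x hx
    rw [iteratedDeriv_succ, iteratedDeriv_succ]
    exact Filter.EventuallyEq.deriv_eq
      (Filter.eventuallyEq_of_mem (hs.mem_nhds hx) (fun y hy => ih y hy))

lemma my_cdOn_prod {ι : Type*} {s : Set ℝ} (f : ι → ℝ → ℝ) (t : Finset ι)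
    (hf : ∀ i ∈ t, ContDiffOn ℝ ∞ (f i) s) :
    ContDiffOn ℝ ∞ (fun x => ∏ i ∈ t, f i x) s := by
  induction t using Finset.cons_induction with
  | empty => simpa using contDiffOn_const
  | cons i t hit ih =>
    simp only [Finset.prod_cons]
    exact (hf i (Finset.mem_cons_self i t)).mul
      (ih fun j hj => hf j (Finset.mem_cons.2 (Or.inr hj)))

lemma my_cdOn_det {m : ℕ} {s : Set ℝ} (g : Fin m → Fin m → ℝ → ℝ)
    (hg : ∀ i j, ContDiffOn ℝ ∞ (g i j) s) :
    ContDiffOn ℝ ∞ (fun x => Matrix.det (Matrix.of fun i j => g i j x)) s := by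
  have : ∀ x, Matrix.det (Matrix.of fun i j => g i j x)
      = ∑ σ : Equiv.Perm (Fin m), ((Equiv.Perm.sign σ : ℤ) : ℝ) * ∏ i, g (σ i) i x := by
    intro x; rw [Matrix.det_apply']; rfl
  rw [funext this]
  exact ContDiffOn.sum fun σ _ => (contDiffOn_const (c := ((Equiv.Perm.sign σ : ℤ) : ℝ))).mul
    (my_cdOn_prod _ _ fun i _ => hg (σ i) i)

/-- minor: delete row `k` from the `(n+1)`-row Wronskian-type array of `h`. -/
noncomputable def mnr (n : ℕ) (h : Fin n → ℝ → ℝ) (k : ℕ) (x : ℝ) : ℝ :=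
  Matrix.det (Matrix.of fun i j : Fin n =>
    iteratedDeriv (if (i:ℕ) < k then (i:ℕ) else (i:ℕ)+1) (h j) x)

noncomputable def acf (n : ℕ) (h : Fin n → ℝ → ℝ) (k : ℕ) : ℝ → ℝ :=
  fun x => ((-1:ℝ)^(n+k) * mnr n h k x) / wronskian n h x

noncomputable def Tof (n : ℕ) (h : Fin n → ℝ → ℝ) (f : ℝ → ℝ) : ℝ → ℝ :=
  fun x => ∑ k ∈ range (n+1), acf n h k x * iteratedDeriv k f x

lemma mnr_n (n : ℕ) (h : Fin n → ℝ → ℝ) (x : ℝ) : mnr n h n x = wronskian n h x := by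
  unfold mnr wronskian
  congr 1
  ext i j
  simp [i.isLt]

/-- Cofactor expansion of the bordered Wronskian along the last column. -/
lemma cofactor (n : ℕ) (h : Fin n → ℝ → ℝ) (f : ℝ → ℝ) (x : ℝ) :
    wronskian (n+1) (Fin.snoc h f) x
      = ∑ k ∈ range (n+1), ((-1:ℝ)^(n+k) * mnr n h k x) * iteratedDeriv k f x := by
  unfold wronskian
  rw [Matrix.det_succ_column _ (Fin.last n)]
  rw [← Fin.sum_univ_eq_sum_range (fun k =>
    ((-1:ℝ)^(n+k) * mnr n h k x) * iteratedDeriv k f x) (n+1)]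
  refine Finset.sum_congr rfl fun i _ => ?_
  have h1 : (Matrix.of fun i j : Fin (n+1) => iteratedDeriv (i:ℕ) ((Fin.snoc h f : Fin (n+1) → ℝ → ℝ) j) x) i
      (Fin.last n) = iteratedDeriv (i:ℕ) f x := by simp
  have h2 : ((Matrix.of fun i j : Fin (n+1) => iteratedDeriv (i:ℕ) ((Fin.snoc h f : Fin (n+1) → ℝ → ℝ) j) x).submatrix
      i.succAbove (Fin.last n).succAbove).det = mnr n h (i:ℕ) x := by
    unfold mnr
    congr 1
    ext a b
    simp only [Matrix.submatrix_apply, Fin.succAbove_last, Matrix.of_apply, Fin.snoc_castSucc]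
    congr 1
    rcases lt_or_ge ((a:ℕ)) (i:ℕ) with hlt | hge
    · rw [Fin.succAbove_of_castSucc_lt _ _ (by simpa [Fin.lt_def] using hlt)]
      simp [hlt]
    · rw [Fin.succAbove_of_le_castSucc _ _ (by simpa [Fin.le_def] using hge)]
      simp [Fin.val_succ, not_lt.mpr hge]
  rw [h1, h2]
  rw [Fin.val_last]
  ring
lemma Tof_eq (n : ℕ) (h : Fin n → ℝ → ℝ) (f : ℝ → ℝ) (x : ℝ) :
    Tof n h f x = wronskian (n+1) (Fin.snoc h f) x / wronskian n h x := by
  rw [cofactor, Finset.sum_div]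
  exact Finset.sum_congr rfl fun k _ => by rw [mul_div_right_comm]; rfl

lemma Tof_h (n : ℕ) (h : Fin n → ℝ → ℝ) (j : Fin n) (x : ℝ) : Tof n h (h j) x = 0 := by
  rw [Tof_eq]
  have : wronskian (n+1) (Fin.snoc h (h j)) x = 0 := by
    unfold wronskian
    refine Matrix.det_zero_of_column_eq (i := Fin.castSucc j) (j := Fin.last n)
      (Fin.ne_of_lt (Fin.castSucc_lt_last j)) fun k => ?_
    simp
  rw [this, zero_div]

lemma acf_n {n : ℕ} {h : Fin n → ℝ → ℝ} {x : ℝ} (hW : wronskian n h x ≠ 0) :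
    acf n h n x = 1 := by
  unfold acf
  rw [mnr_n]
  have : ((-1:ℝ))^(n+n) = 1 := by
    rw [← two_mul]; exact (Even.neg_one_pow ⟨n, two_mul n⟩)
  rw [this, one_mul, div_self hW]

/-- Derivative of the Wronskian. -/
lemma wronskian_hasDeriv {n : ℕ} (hn : 0 < n) {h : Fin n → ℝ → ℝ} {s : Set ℝ} (hs : IsOpen s)
    (hsm : ∀ j, ContDiffOn ℝ ∞ (h j) s) {x : ℝ} (hx : x ∈ s) :
    HasDerivAt (wronskian n h) (mnr n h (n-1) x) x := by
  classical
  have hW : wronskian n h = fun y => ∑ σ : Equiv.Perm (Fin n),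
      ((Equiv.Perm.sign σ : ℤ):ℝ) * ∏ j, iteratedDeriv ((σ j : ℕ)) (h j) y := by
    funext y; unfold wronskian; rw [Matrix.det_apply']; rfl
  rw [hW]
  have key : ∀ σ : Equiv.Perm (Fin n),
      HasDerivAt (fun y => ((Equiv.Perm.sign σ : ℤ):ℝ) * ∏ j, iteratedDeriv ((σ j : ℕ)) (h j) y)
      (((Equiv.Perm.sign σ : ℤ):ℝ) * ∑ i : Fin n,
        (∏ j ∈ Finset.univ.erase i, iteratedDeriv ((σ j : ℕ)) (h j) x)
          * iteratedDeriv ((σ i : ℕ)+1) (h i) x) x := by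
    intro σ
    refine HasDerivAt.const_mul _ ?_
    have := HasDerivAt.fun_finsetProd (u := (Finset.univ : Finset (Fin n)))
      (f := fun j y => iteratedDeriv ((σ j : ℕ)) (h j) y)
      (f' := fun j => iteratedDeriv ((σ j : ℕ)+1) (h j) x)
      (fun i _ => my_hasDerivAt_iter hs (hsm i) _ hx)
    simpa [smul_eq_mul] using this
  have total := HasDerivAt.fun_sum (u := (Finset.univ : Finset (Equiv.Perm (Fin n))))
    (fun σ _ => key σ)
  refine total.congr_deriv ?_
  -- now the determinant identity for the derivative value
  -- R i := det with row i bumped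
  have Rdef : ∀ i : Fin n, Matrix.det (Matrix.of fun r j : Fin n =>
      iteratedDeriv ((r:ℕ) + if r = i then 1 else 0) (h j) x)
      = ∑ σ : Equiv.Perm (Fin n), ((Equiv.Perm.sign σ : ℤ):ℝ)
        * ∏ j, iteratedDeriv (((σ j):ℕ) + if σ j = i then 1 else 0) (h j) x := by
    intro i; rw [Matrix.det_apply']; rfl
  have claimA : ∑ σ : Equiv.Perm (Fin n), ((Equiv.Perm.sign σ : ℤ):ℝ) * ∑ i : Fin n,
        (∏ j ∈ Finset.univ.erase i, iteratedDeriv ((σ j : ℕ)) (h j) x)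
          * iteratedDeriv ((σ i : ℕ)+1) (h i) x
      = ∑ i : Fin n, Matrix.det (Matrix.of fun r j : Fin n =>
          iteratedDeriv ((r:ℕ) + if r = i then 1 else 0) (h j) x) := by
    have swap : ∀ σ : Equiv.Perm (Fin n), ∑ i : Fin n,
        (∏ j ∈ Finset.univ.erase i, iteratedDeriv ((σ j : ℕ)) (h j) x)
          * iteratedDeriv ((σ i : ℕ)+1) (h i) x
        = ∑ i : Fin n, ∏ j, iteratedDeriv (((σ j):ℕ) + if σ j = i then 1 else 0) (h j) x := by
      intro σ
      refine Fintype.sum_equiv σ _ _ fun i => ?_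
      have expand : ∏ j : Fin n, iteratedDeriv (((σ j):ℕ) + if σ j = σ i then 1 else 0) (h j) x
          = (iteratedDeriv (((σ i):ℕ) + if σ i = σ i then 1 else 0) (h i) x)
            * ∏ j ∈ Finset.univ.erase i,
                iteratedDeriv (((σ j):ℕ) + if σ j = σ i then 1 else 0) (h j) x :=
        (Finset.mul_prod_erase Finset.univ
          (fun j => iteratedDeriv (((σ j):ℕ) + if σ j = σ i then 1 else 0) (h j) x)
          (Finset.mem_univ i)).symm
      rw [expand, if_pos rfl, mul_comm]
      congr 1
      refine Finset.prod_congr rfl fun j hj => ?_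
      have hne : ¬ (σ j = σ i) := fun hc => (Finset.mem_erase.1 hj).1 (σ.injective hc)
      rw [if_neg hne, add_zero]
    calc ∑ σ : Equiv.Perm (Fin n), ((Equiv.Perm.sign σ : ℤ):ℝ) * ∑ i : Fin n,
        (∏ j ∈ Finset.univ.erase i, iteratedDeriv ((σ j : ℕ)) (h j) x)
          * iteratedDeriv ((σ i : ℕ)+1) (h i) x
        = ∑ σ : Equiv.Perm (Fin n), ∑ i : Fin n, ((Equiv.Perm.sign σ : ℤ):ℝ)
          * ∏ j, iteratedDeriv (((σ j):ℕ) + if σ j = i then 1 else 0) (h j) x := by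
          refine Finset.sum_congr rfl fun σ _ => ?_
          rw [swap σ, Finset.mul_sum]
      _ = ∑ i : Fin n, ∑ σ : Equiv.Perm (Fin n), ((Equiv.Perm.sign σ : ℤ):ℝ)
          * ∏ j, iteratedDeriv (((σ j):ℕ) + if σ j = i then 1 else 0) (h j) x :=
          Finset.sum_comm
      _ = _ := by
          refine Finset.sum_congr rfl fun i _ => ?_
          rw [Rdef i]
  rw [claimA]
  -- claim B
  have claimB : ∑ i : Fin n, Matrix.det (Matrix.of fun r j : Fin n =>
      iteratedDeriv ((r:ℕ) + if r = i then 1 else 0) (h j) x) = mnr n h (n-1) x := by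
    rw [Finset.sum_eq_single (⟨n-1, by omega⟩ : Fin n)]
    · unfold mnr
      congr 1
      ext r j
      simp only [Matrix.of_apply]
      congr 1
      rcases eq_or_ne r (⟨n-1, by omega⟩ : Fin n) with hr | hr
      · have : ¬ ((r:ℕ) < n-1) := by rw [hr]; simp
        simp [hr, this]
      · have hrlt : (r:ℕ) < n-1 := by
          have := r.isLt
          have : (r:ℕ) ≠ n-1 := fun hc => hr (by ext; simpa using hc)
          omega
        simp [hr, hrlt]
    · intro i _ hi
      have hilt : (i:ℕ)+1 < n := by
        have := i.isLt
        have : (i:ℕ) ≠ n-1 := fun hc => hi (by ext; simpa using hc)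
        omega
      refine Matrix.det_zero_of_row_eq (i := i) (j := ⟨(i:ℕ)+1, hilt⟩)
        (fun hc => by simpa using congrArg Fin.val hc) ?_
      funext j
      simp only [Matrix.of_apply]
      have : ¬ ((⟨(i:ℕ)+1, hilt⟩ : Fin n) = i) := fun hc => by simpa using congrArg Fin.val hc
      simp [this]
    · intro hmem
      exact absurd (Finset.mem_univ _) hmem
  rw [claimB]
lemma my_diffAt {f : ℝ → ℝ} {s : Set ℝ} (hs : IsOpen s) (hf : ContDiffOn ℝ ∞ f s)
    {x : ℝ} (hx : x ∈ s) : DifferentiableAt ℝ f x :=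
  ((hf.differentiableOn (by simp)) x hx).differentiableAt (hs.mem_nhds hx)

noncomputable def Pc (c : ℝ → ℝ) : ℕ → ℕ → ℝ → ℝ
  | 0, 0 => fun x => 2 * c x
  | 0, _+1 => fun _ => 0
  | k+1, 0 => deriv (Pc c k 0)
  | k+1, i+1 => fun x => deriv (Pc c k (i+1)) x + Pc c k i x

lemma Pc_gt (c : ℝ → ℝ) : ∀ k i, k < i → Pc c k i = fun _ => 0 := by
  intro k
  induction k with
  | zero => intro i hi; match i, hi with | j+1, _ => rfl
  | succ k ih =>
    intro i hi
    match i, hi with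
    | j+1, hi =>
      show (fun x => deriv (Pc c k (j+1)) x + Pc c k j x) = fun _ => 0
      rw [ih (j+1) (by omega), ih j (by omega)]
      funext y
      simp

lemma Pc_diag (c : ℝ → ℝ) : ∀ k, Pc c k k = fun x => 2 * c x := by
  intro k
  induction k with
  | zero => rfl
  | succ k ih =>
    show (fun x => deriv (Pc c k (k+1)) x + Pc c k k x) = fun x => 2 * c x
    rw [Pc_gt c k (k+1) (by omega), ih]
    funext y
    simp

lemma Pc_smooth {c : ℝ → ℝ} {s : Set ℝ} (hs : IsOpen s) (hc : ContDiffOn ℝ ∞ c s) :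
    ∀ k i, ContDiffOn ℝ ∞ (Pc c k i) s := by
  intro k
  induction k with
  | zero =>
    intro i
    match i with
    | 0 => exact contDiffOn_const.mul hc
    | j+1 => exact contDiffOn_const
  | succ k ih =>
    intro i
    match i with
    | 0 => exact (ih 0).deriv_of_isOpen hs (by simp)
    | j+1 => exact ((ih (j+1)).deriv_of_isOpen hs (by simp)).add (ih j)

lemma leib {c u : ℝ → ℝ} {s : Set ℝ} (hs : IsOpen s) (hc : ContDiffOn ℝ ∞ c s)
    (hu : ContDiffOn ℝ ∞ u s) (e : ℝ) :
    ∀ k, ∀ x ∈ s, iteratedDeriv k (fun y => (2 * c y + e) * u y) x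
      = (∑ i ∈ range (k+1), Pc c k i x * iteratedDeriv i u x) + e * iteratedDeriv k u x := by
  intro k
  induction k with
  | zero =>
    intro x hx
    simp only [iteratedDeriv_zero, zero_add, range_one, sum_singleton]
    show (2 * c x + e) * u x = (2 * c x) * u x + e * u x
    ring
  | succ k ih =>
    intro x hx
    rw [iteratedDeriv_succ]
    have hev : iteratedDeriv k (fun y => (2 * c y + e) * u y) =ᶠ[nhds x]
        fun y => (∑ i ∈ range (k+1), Pc c k i y * iteratedDeriv i u y)
          + e * iteratedDeriv k u y :=
      Filter.eventuallyEq_of_mem (hs.mem_nhds hx) (fun y hy => ih y hy)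
    rw [hev.deriv_eq]
    have hder : HasDerivAt (fun y => (∑ i ∈ range (k+1), Pc c k i y * iteratedDeriv i u y)
        + e * iteratedDeriv k u y)
        ((∑ i ∈ range (k+1), (deriv (Pc c k i) x * iteratedDeriv i u x
           + Pc c k i x * iteratedDeriv (i+1) u x)) + e * iteratedDeriv (k+1) u x) x := by
      refine HasDerivAt.add (HasDerivAt.fun_sum fun i _ => ?_) ?_
      · exact ((my_diffAt hs (Pc_smooth hs hc k i) hx).hasDerivAt).mul
          (my_hasDerivAt_iter hs hu i hx)
      · exact (my_hasDerivAt_iter hs hu k hx).const_mul e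
    rw [hder.deriv]
    congr 1
    have hzero : deriv (Pc c k (k+1)) x = 0 := by
      rw [Pc_gt c k (k+1) (by omega)]
      simp
    rw [Finset.sum_add_distrib]
    rw [Finset.sum_range_succ' (fun i => Pc c (k+1) i x * iteratedDeriv i u x) (k+1)]
    have e1 : ∀ i, Pc c (k+1) (i+1) x = deriv (Pc c (k+1-1) (i+1)) x + Pc c k i x := fun i => rfl
    have e2 : Pc c (k+1) 0 x = deriv (Pc c k 0) x := rfl
    simp only [e1, e2, Nat.add_sub_cancel]
    rw [show (∑ i ∈ range (k+1), (deriv (Pc c k (i+1)) x + Pc c k i x) * iteratedDeriv (i+1) u x)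
        = (∑ i ∈ range (k+1), deriv (Pc c k (i+1)) x * iteratedDeriv (i+1) u x)
          + ∑ i ∈ range (k+1), Pc c k i x * iteratedDeriv (i+1) u x by
      rw [← Finset.sum_add_distrib]; exact Finset.sum_congr rfl fun i _ => by ring]
    rw [Finset.sum_range_succ (fun i => deriv (Pc c k (i+1)) x * iteratedDeriv (i+1) u x) k,
      hzero]
    rw [Finset.sum_range_succ' (fun i => deriv (Pc c k i) x * iteratedDeriv i u x) k]
    ring

lemma wronskian_smooth {n : ℕ} {h : Fin n → ℝ → ℝ} {s : Set ℝ} (hs : IsOpen s)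
    (hsm : ∀ j, ContDiffOn ℝ ∞ (h j) s) : ContDiffOn ℝ ∞ (wronskian n h) s := by
  have : wronskian n h = fun x => Matrix.det (Matrix.of fun i j : Fin n =>
      iteratedDeriv (i:ℕ) (h j) x) := rfl
  rw [this]
  exact my_cdOn_det _ (fun i j => my_itsmooth hs (hsm j) i)

lemma mnr_smooth {n : ℕ} {h : Fin n → ℝ → ℝ} {s : Set ℝ} (hs : IsOpen s)
    (hsm : ∀ j, ContDiffOn ℝ ∞ (h j) s) (k : ℕ) : ContDiffOn ℝ ∞ (fun x => mnr n h k x) s := by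
  have : (fun x => mnr n h k x) = fun x => Matrix.det (Matrix.of fun i j : Fin n =>
      iteratedDeriv (if (i:ℕ) < k then (i:ℕ) else (i:ℕ)+1) (h j) x) := rfl
  rw [this]
  exact my_cdOn_det _ (fun i j => my_itsmooth hs (hsm j) _)

lemma acf_smooth {n : ℕ} {h : Fin n → ℝ → ℝ} {s : Set ℝ} (hs : IsOpen s)
    (hsm : ∀ j, ContDiffOn ℝ ∞ (h j) s) (hW : ∀ x ∈ s, wronskian n h x ≠ 0) (k : ℕ) :
    ContDiffOn ℝ ∞ (acf n h k) s := by
  unfold acf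
  exact ContDiffOn.div (contDiffOn_const.mul (mnr_smooth hs hsm k))
    (wronskian_smooth hs hsm) hW

noncomputable def qnf (n : ℕ) (h : Fin n → ℝ → ℝ) (c : ℝ → ℝ) : ℝ → ℝ := fun x =>
  2 * c x - 2 * deriv (fun y => deriv (wronskian n h) y / wronskian n h y) x

noncomputable def bcf (n : ℕ) (h : Fin n → ℝ → ℝ) (c : ℝ → ℝ) (m : ℕ) : ℝ → ℝ := fun x =>
  (if m ≤ n then deriv (deriv (acf n h m)) x - qnf n h c x * acf n h m x else 0)
  + (if 1 ≤ m ∧ m ≤ n + 1 then 2 * deriv (acf n h (m-1)) x else 0)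
  + ∑ k ∈ range (n+1), (if m ≤ k then acf n h k x * Pc c k m x else 0)

lemma key_expand {n : ℕ} {h : Fin n → ℝ → ℝ} {c u : ℝ → ℝ} {s : Set ℝ} (hs : IsOpen s)
    (hsm : ∀ j, ContDiffOn ℝ ∞ (h j) s) (hc : ContDiffOn ℝ ∞ c s) (hu : ContDiffOn ℝ ∞ u s)
    (hW : ∀ x ∈ s, wronskian n h x ≠ 0) {e : ℝ}
    (hode : ∀ y ∈ s, deriv (deriv u) y = (2 * c y + e) * u y)
    {x : ℝ} (hx : x ∈ s) :
    deriv (deriv (Tof n h u)) x - (qnf n h c x + e) * Tof n h u x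
      = ∑ m ∈ range (n+2), bcf n h c m x * iteratedDeriv m u x := by
  have hak : ∀ k, ContDiffOn ℝ ∞ (acf n h k) s := acf_smooth hs hsm hW
  have hdak : ∀ k, ContDiffOn ℝ ∞ (deriv (acf n h k)) s :=
    fun k => (hak k).deriv_of_isOpen hs (by simp)
  have step1 : ∀ y ∈ s, deriv (Tof n h u) y
      = ∑ k ∈ range (n+1), (deriv (acf n h k) y * iteratedDeriv k u y
          + acf n h k y * iteratedDeriv (k+1) u y) := by
    intro y hy
    exact HasDerivAt.deriv (HasDerivAt.fun_sum fun k _ =>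
      ((my_diffAt hs (hak k) hy).hasDerivAt).mul (my_hasDerivAt_iter hs hu k hy))
  have step2 : deriv (deriv (Tof n h u)) x
      = ∑ k ∈ range (n+1), (deriv (deriv (acf n h k)) x * iteratedDeriv k u x
          + 2 * (deriv (acf n h k) x * iteratedDeriv (k+1) u x)
          + acf n h k x * iteratedDeriv (k+2) u x) := by
    have hev : deriv (Tof n h u) =ᶠ[nhds x] fun y => ∑ k ∈ range (n+1),
        (deriv (acf n h k) y * iteratedDeriv k u y + acf n h k y * iteratedDeriv (k+1) u y) :=
      Filter.eventuallyEq_of_mem (hs.mem_nhds hx) step1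
    rw [hev.deriv_eq]
    have H : HasDerivAt (fun y => ∑ k ∈ range (n+1),
        (deriv (acf n h k) y * iteratedDeriv k u y + acf n h k y * iteratedDeriv (k+1) u y))
        (∑ k ∈ range (n+1), ((deriv (deriv (acf n h k)) x * iteratedDeriv k u x
            + deriv (acf n h k) x * iteratedDeriv (k+1) u x)
          + (deriv (acf n h k) x * iteratedDeriv (k+1) u x
            + acf n h k x * iteratedDeriv (k+2) u x))) x := by
      refine HasDerivAt.fun_sum fun k _ => ?_
      exact (((my_diffAt hs (hdak k) hx).hasDerivAt).mul (my_hasDerivAt_iter hs hu k hx)).add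
        (((my_diffAt hs (hak k) hx).hasDerivAt).mul (my_hasDerivAt_iter hs hu (k+1) hx))
    rw [H.deriv]
    exact Finset.sum_congr rfl fun k _ => by ring
  have step3 : ∀ k : ℕ, iteratedDeriv (k+2) u x
      = (∑ i ∈ range (k+1), Pc c k i x * iteratedDeriv i u x) + e * iteratedDeriv k u x := by
    intro k
    have h1 : iteratedDeriv (k+2) u = iteratedDeriv k (deriv (deriv u)) := by
      rw [show k+2 = (k+1)+1 from rfl, iteratedDeriv_succ', iteratedDeriv_succ']
    rw [h1, my_itcongr hs hode k x hx]
    exact leib hs hc hu e k x hx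
  have step4 : deriv (deriv (Tof n h u)) x
      = (∑ k ∈ range (n+1), deriv (deriv (acf n h k)) x * iteratedDeriv k u x)
      + (∑ k ∈ range (n+1), 2 * (deriv (acf n h k) x * iteratedDeriv (k+1) u x))
      + (∑ k ∈ range (n+1), acf n h k x * (∑ i ∈ range (k+1), Pc c k i x * iteratedDeriv i u x))
      + e * ∑ k ∈ range (n+1), acf n h k x * iteratedDeriv k u x := by
    rw [step2, Finset.mul_sum, ← Finset.sum_add_distrib, ← Finset.sum_add_distrib,
      ← Finset.sum_add_distrib]
    refine Finset.sum_congr rfl fun k _ => ?_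
    rw [step3 k]
    ring
  have hTof : Tof n h u x = ∑ k ∈ range (n+1), acf n h k x * iteratedDeriv k u x := rfl
  -- now expand the b-sum
  have piece1 : ∑ m ∈ range (n+2),
      (if m ≤ n then deriv (deriv (acf n h m)) x - qnf n h c x * acf n h m x else 0)
        * iteratedDeriv m u x
      = (∑ k ∈ range (n+1), deriv (deriv (acf n h k)) x * iteratedDeriv k u x)
        - qnf n h c x * ∑ k ∈ range (n+1), acf n h k x * iteratedDeriv k u x := by
    rw [Finset.sum_range_succ]
    rw [if_neg (by omega)]
    rw [zero_mul, add_zero, Finset.mul_sum, ← Finset.sum_sub_distrib]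
    refine Finset.sum_congr rfl fun m hm => ?_
    rw [if_pos (by simp at hm; omega)]
    ring
  have piece2 : ∑ m ∈ range (n+2),
      (if 1 ≤ m ∧ m ≤ n + 1 then 2 * deriv (acf n h (m-1)) x else 0) * iteratedDeriv m u x
      = ∑ k ∈ range (n+1), 2 * (deriv (acf n h k) x * iteratedDeriv (k+1) u x) := by
    rw [Finset.sum_range_succ'
      (fun m => (if 1 ≤ m ∧ m ≤ n + 1 then 2 * deriv (acf n h (m-1)) x else 0)
        * iteratedDeriv m u x) (n+1)]
    rw [if_neg (by omega), zero_mul, add_zero]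
    refine Finset.sum_congr rfl fun k hk => ?_
    rw [if_pos (by simp at hk; omega)]
    simp only [Nat.add_sub_cancel]
    ring
  have piece3 : ∑ m ∈ range (n+2),
      (∑ k ∈ range (n+1), (if m ≤ k then acf n h k x * Pc c k m x else 0)) * iteratedDeriv m u x
      = ∑ k ∈ range (n+1), acf n h k x
          * (∑ i ∈ range (k+1), Pc c k i x * iteratedDeriv i u x) := by
    have e1 : ∀ m ∈ range (n+2),
        (∑ k ∈ range (n+1), (if m ≤ k then acf n h k x * Pc c k m x else 0))
          * iteratedDeriv m u x
        = ∑ k ∈ range (n+1), (if m ≤ k then acf n h k x * Pc c k m x * iteratedDeriv m u x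
            else 0) := by
      intro m _
      rw [Finset.sum_mul]
      exact Finset.sum_congr rfl fun k _ => by rw [ite_mul, zero_mul]
    rw [Finset.sum_congr rfl e1, Finset.sum_comm]
    refine Finset.sum_congr rfl fun k hk => ?_
    have hkn : k + 1 ≤ n + 2 := by simp at hk; omega
    have sub : ∑ m ∈ range (k+1), (if m ≤ k then acf n h k x * Pc c k m x * iteratedDeriv m u x
          else 0)
        = ∑ m ∈ range (n+2), (if m ≤ k then acf n h k x * Pc c k m x * iteratedDeriv m u x
          else 0) :=
      Finset.sum_subset (Finset.range_subset_range.2 hkn)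
        (fun m _ hm => if_neg (by simp at hm; omega))
    rw [← sub, Finset.mul_sum]
    refine Finset.sum_congr rfl fun m hm => ?_
    rw [if_pos (by simp at hm; omega)]
    ring
  have hb : ∑ m ∈ range (n+2), bcf n h c m x * iteratedDeriv m u x
      = ((∑ k ∈ range (n+1), deriv (deriv (acf n h k)) x * iteratedDeriv k u x)
        - qnf n h c x * ∑ k ∈ range (n+1), acf n h k x * iteratedDeriv k u x)
      + (∑ k ∈ range (n+1), 2 * (deriv (acf n h k) x * iteratedDeriv (k+1) u x))
      + (∑ k ∈ range (n+1), acf n h k x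
          * (∑ i ∈ range (k+1), Pc c k i x * iteratedDeriv i u x)) := by
    have expand : ∀ m ∈ range (n+2), bcf n h c m x * iteratedDeriv m u x
        = (if m ≤ n then deriv (deriv (acf n h m)) x - qnf n h c x * acf n h m x else 0)
            * iteratedDeriv m u x
          + (if 1 ≤ m ∧ m ≤ n + 1 then 2 * deriv (acf n h (m-1)) x else 0) * iteratedDeriv m u x
          + (∑ k ∈ range (n+1), (if m ≤ k then acf n h k x * Pc c k m x else 0))
              * iteratedDeriv m u x := by
      intro m _
      unfold bcf
      ring
    rw [Finset.sum_congr rfl expand, Finset.sum_add_distrib, Finset.sum_add_distrib,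
      piece1, piece2, piece3]
  rw [step4, hTof, hb]
  ring

lemma acf_n_deriv {n : ℕ} {h : Fin n → ℝ → ℝ} {s : Set ℝ} (hs : IsOpen s)
    (hW : ∀ y ∈ s, wronskian n h y ≠ 0) :
    ∀ x ∈ s, deriv (acf n h n) x = 0 := by
  intro x hx
  have hev : acf n h n =ᶠ[nhds x] fun _ => (1:ℝ) :=
    Filter.eventuallyEq_of_mem (hs.mem_nhds hx) (fun y hy => acf_n (hW y hy))
  rw [hev.deriv_eq]
  simp

lemma acf_n_deriv2 {n : ℕ} {h : Fin n → ℝ → ℝ} {s : Set ℝ} (hs : IsOpen s)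
    (hW : ∀ y ∈ s, wronskian n h y ≠ 0) :
    ∀ x ∈ s, deriv (deriv (acf n h n)) x = 0 := by
  intro x hx
  have hev : deriv (acf n h n) =ᶠ[nhds x] fun _ => (0:ℝ) :=
    Filter.eventuallyEq_of_mem (hs.mem_nhds hx) (fun y hy => acf_n_deriv hs hW y hy)
  rw [hev.deriv_eq]
  simp

lemma btop1 {n : ℕ} {h : Fin n → ℝ → ℝ} {c : ℝ → ℝ} {s : Set ℝ} (hs : IsOpen s)
    (hW : ∀ y ∈ s, wronskian n h y ≠ 0) :
    ∀ x ∈ s, bcf n h c (n+1) x = 0 := by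
  intro x hx
  unfold bcf
  rw [if_neg (by omega), if_pos (by omega)]
  simp only [Nat.add_sub_cancel]
  rw [acf_n_deriv hs hW x hx]
  rw [Finset.sum_eq_zero (fun k hk => if_neg (by simp at hk; omega))]
  ring

lemma btopn {n : ℕ} {h : Fin n → ℝ → ℝ} {c : ℝ → ℝ} {s : Set ℝ} (hs : IsOpen s)
    (hsm : ∀ j, ContDiffOn ℝ ∞ (h j) s)
    (hW : ∀ y ∈ s, wronskian n h y ≠ 0) :
    ∀ x ∈ s, bcf n h c n x = 0 := by
  intro x hx
  unfold bcf
  rw [if_pos (le_refl n)]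
  rw [acf_n_deriv2 hs hW x hx, acf_n (hW x hx)]
  have hsum : ∑ k ∈ range (n+1), (if n ≤ k then acf n h k x * Pc c k n x else 0)
      = 2 * c x := by
    rw [Finset.sum_eq_single n]
    · rw [if_pos (le_refl n), acf_n (hW x hx), Pc_diag]
      ring
    · intro k hk hkn
      exact if_neg (by simp at hk; omega)
    · intro hmem
      exact absurd (by simp : n ∈ range (n+1)) hmem
  rw [hsum]
  rcases Nat.eq_zero_or_pos n with hn | hn
  · subst hn
    rw [if_neg (by omega)]
    have hW1 : wronskian 0 h = fun _ => (1:ℝ) := by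
      funext y
      exact Matrix.det_fin_zero
    unfold qnf
    rw [hW1]
    have h0 : (fun y : ℝ => deriv (fun _ : ℝ => (1:ℝ)) y / (1:ℝ)) = fun _ : ℝ => (0:ℝ) := by
      funext y
      simp
    rw [h0]
    simp
  · rw [if_pos (by omega)]
    -- deriv (acf n h (n-1)) x = - deriv (W'/W) x
    have hev : acf n h (n-1) =ᶠ[nhds x]
        fun y => -(deriv (wronskian n h) y / wronskian n h y) := by
      refine Filter.eventuallyEq_of_mem (hs.mem_nhds hx) (fun y hy => ?_)
      have hmn : mnr n h (n-1) y = deriv (wronskian n h) y :=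
        ((wronskian_hasDeriv hn hs hsm hy).deriv).symm
      unfold acf
      rw [hmn]
      have hodd : ((-1:ℝ))^(n+(n-1)) = -1 :=
        Odd.neg_one_pow ⟨n-1, by omega⟩
      rw [hodd]
      ring
    have hder : deriv (acf n h (n-1)) x
        = - deriv (fun y => deriv (wronskian n h) y / wronskian n h y) x := by
      rw [hev.deriv_eq]
      exact deriv.neg
    rw [hder]
    unfold qnf
    ring

lemma bvanish {n : ℕ} {h : Fin n → ℝ → ℝ} {c : ℝ → ℝ} {lam : Fin n → ℝ} {s : Set ℝ}
    (hs : IsOpen s) (hsm : ∀ j, ContDiffOn ℝ ∞ (h j) s) (hc : ContDiffOn ℝ ∞ c s)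
    (hW : ∀ y ∈ s, wronskian n h y ≠ 0)
    (hode : ∀ j, ∀ y ∈ s, deriv (deriv (h j)) y = (2 * c y + 2 * lam j) * h j y) :
    ∀ x ∈ s, ∀ m < n, bcf n h c m x = 0 := by
  intro x hx
  have hmat : ∀ j : Fin n, ∑ m ∈ range n, bcf n h c m x * iteratedDeriv m (h j) x = 0 := by
    intro j
    have hkey := key_expand hs hsm hc (hsm j) hW (hode j) hx
    have hT0 : Tof n h (h j) = fun _ => (0:ℝ) := funext (Tof_h n h j)
    rw [hT0] at hkey
    simp only [deriv_const'] at hkey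
    rw [Finset.sum_range_succ, Finset.sum_range_succ] at hkey
    rw [btop1 hs hW x hx, btopn hs hsm hW x hx] at hkey
    simp only [zero_mul, add_zero, mul_zero, sub_zero, zero_sub, zero_mul] at hkey
    linarith [hkey]
  classical
  set M : Matrix (Fin n) (Fin n) ℝ :=
    Matrix.of (fun m j : Fin n => iteratedDeriv (m:ℕ) (h j) x) with hM
  have hdet : IsUnit M.det := isUnit_iff_ne_zero.2 (hW x hx)
  set v : Fin n → ℝ := fun m => bcf n h c (m:ℕ) x with hv
  have hvM : Matrix.vecMul v M = 0 := by
    funext j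
    show ∑ m : Fin n, v m * M m j = 0
    have hterm : ∀ m : Fin n, v m * M m j
        = (fun k : ℕ => bcf n h c k x * iteratedDeriv k (h j) x) (m:ℕ) := fun m => rfl
    rw [Finset.sum_congr rfl (fun m _ => hterm m),
      Fin.sum_univ_eq_sum_range (fun k : ℕ => bcf n h c k x * iteratedDeriv k (h j) x) n]
    exact hmat j
  have hv0 : v = 0 := by
    have h1 := congrArg (fun w => Matrix.vecMul w M⁻¹) hvM
    simpa [Matrix.vecMul_vecMul, Matrix.mul_nonsing_inv M hdet, Matrix.vecMul_one,
      Matrix.zero_vecMul] using h1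
  intro m hm
  exact congrFun hv0 ⟨m, hm⟩

theorem stmt15 (l r : EReal) (hlr : l < r) (c : ℝ → ℝ) (n : ℕ)
    (h : Fin n → ℝ → ℝ) (ψ : ℝ → ℝ) (lam : Fin n → ℝ) (κ : ℝ)
    (hc : ∀ x ∈ erIoo l r, ContDiffAt ℝ (⊤ : ℕ∞) c x)
    (hh : ∀ i, ∀ x ∈ erIoo l r, ContDiffAt ℝ (⊤ : ℕ∞) (h i) x)
    (hψ : ∀ x ∈ erIoo l r, ContDiffAt ℝ (⊤ : ℕ∞) ψ x)
    (heig : ∀ i, ∀ x ∈ erIoo l r,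
      (1 / 2) * deriv (deriv (h i)) x - c x * h i x = lam i * h i x)
    (hψeig : ∀ x ∈ erIoo l r,
      (1 / 2) * deriv (deriv ψ) x - c x * ψ x = κ * ψ x)
    (hW : ∀ x ∈ erIoo l r, wronskian n h x ≠ 0)
    (ψn : ℝ → ℝ)
    (hψn : ψn = fun x => wronskian (n + 1) (Fin.snoc h ψ) x / wronskian n h x)
    (cn : ℝ → ℝ)
    (hcn : cn = fun x =>
      c x - deriv (fun y => deriv (fun z => wronskian n h z) y / wronskian n h y) x) :
    ∀ x ∈ erIoo l r, (1 / 2) * deriv (deriv ψn) x - cn x * ψn x = κ * ψn x := by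
  intro x hx
  have hs : IsOpen (erIoo l r) := erIoo_open l r
  have hcs : ContDiffOn ℝ ∞ c (erIoo l r) :=
    fun y hy => ((hc y hy).of_le (by simp)).contDiffWithinAt
  have hsm : ∀ j, ContDiffOn ℝ ∞ (h j) (erIoo l r) :=
    fun j y hy => ((hh j y hy).of_le (by simp)).contDiffWithinAt
  have hψs : ContDiffOn ℝ ∞ ψ (erIoo l r) :=
    fun y hy => ((hψ y hy).of_le (by simp)).contDiffWithinAt
  have hodeh : ∀ j, ∀ y ∈ erIoo l r,
      deriv (deriv (h j)) y = (2 * c y + 2 * lam j) * h j y := by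
    intro j y hy
    linear_combination 2 * heig j y hy
  have hodeψ : ∀ y ∈ erIoo l r, deriv (deriv ψ) y = (2 * c y + 2 * κ) * ψ y := by
    intro y hy
    linear_combination 2 * hψeig y hy
  have hkey := key_expand hs hsm hcs hψs hW (e := 2*κ) hodeψ hx
  have hsum0 : ∑ m ∈ range (n+2), bcf n h c m x * iteratedDeriv m ψ x = 0 := by
    rw [Finset.sum_range_succ, Finset.sum_range_succ]
    rw [btop1 hs hW x hx, btopn hs hsm hW x hx]
    rw [Finset.sum_eq_zero (fun m hm => by
      rw [bvanish hs hsm hcs hW hodeh x hx m (by simp at hm; omega), zero_mul])]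
    ring
  rw [hsum0] at hkey
  have hψnT : ψn = Tof n h ψ := by
    rw [hψn]
    funext y
    rw [Tof_eq]
  have hq : qnf n h c x = 2 * cn x := by
    rw [hcn]
    unfold qnf
    ring
  have hdd : deriv (deriv (Tof n h ψ)) x = (2 * cn x + 2 * κ) * Tof n h ψ x := by
    rw [← hq]
    linarith [hkey]
  rw [hψnT]
  linear_combination (1/2) * hdd
end
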